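/- arXiv:2604.18113 — 3 statements merged into one kernel-verified Lean document; each statement's English description precedes it below -/
import Mathlib

section
/- Let α > −1 and u ≥ 0. Then ∫_0^u J_α(t) dt = (u^{α+1}/2^{α}) · (1/Γ(α+2)) · ₁F₂((α+1)/2; α+1, (α+3)/2; −u²/4). -/
open Filter Finset intervalIntegral

noncomputable section

/-- Bessel function of the first kind `J_ν(x)` (series definition). -/
noncomputable def besselJ (ν x : ℝ) : ℝ :=
  ∑' m : ℕ, ((-1) ^ m / ((m.factorial : ℝ) * Real.Gamma ((m : ℝ) + ν + 1))) *
    (x / 2) ^ (2 * (m : ℝ) + ν)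

/-- Rising factorial `(x)_n = x(x+1)⋯(x+n−1)`. -/
def rf (x : ℝ) (n : ℕ) : ℝ := ∏ m ∈ Finset.range n, (x + m)

/-- The hypergeometric series `₁F₂(a; b₁, b₂; z)`. -/
def hyp1F2 (a b₁ b₂ z : ℝ) : ℝ :=
  ∑' n : ℕ, rf a n / (rf b₁ n * rf b₂ n) * z ^ n / (n.factorial : ℝ)

lemma rf_succ_right (x : ℝ) (n : ℕ) : rf x (n+1) = rf x n * (x + n) := by
  simp [rf, Finset.prod_range_succ]

lemma rf_succ_left (x : ℝ) (n : ℕ) : rf x (n+1) = x * rf (x+1) n := by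
  rw [rf, Finset.prod_range_succ', rf]
  have h0 : x + ((0:ℕ):ℝ) = x := by norm_num
  rw [h0, mul_comm]
  congr 1
  apply Finset.prod_congr rfl
  intro m _
  push_cast
  ring

lemma rf_pos {x : ℝ} (hx : 0 < x) (n : ℕ) : 0 < rf x n := by
  apply Finset.prod_pos
  intro m _
  positivity

lemma Gamma_rf {x : ℝ} (hx : 0 < x) (n : ℕ) :
    Real.Gamma (x + n) = rf x n * Real.Gamma x := by
  induction n with
  | zero => simp [rf]
  | succ n ih =>
    have h : x + (n+1 : ℕ) = (x + n) + 1 := by push_cast; ring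
    rw [h, Real.Gamma_add_one (by positivity), ih, rf_succ_right]
    ring

lemma term_eq (α u : ℝ) (hα : -1 < α) (hu : 0 < u) (n : ℕ) :
    ((-1)^n / ((n.factorial:ℝ) * Real.Gamma ((n:ℝ) + α + 1))) *
      (u ^ (2*(n:ℝ) + α + 1) / ((2:ℝ) ^ (2*(n:ℝ)+α) * (2*(n:ℝ)+α+1))) =
    u ^ (α+1) / (2:ℝ)^α * (1/Real.Gamma (α+2)) *
      (rf ((α+1)/2) n / (rf (α+1) n * rf ((α+3)/2) n) * (-(u^2)/4)^n / (n.factorial:ℝ)) := by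
  have hα1 : (0:ℝ) < α + 1 := by linarith
  have h2nα : (0:ℝ) < 2*(n:ℝ)+α+1 := by
    have : (0:ℝ) ≤ 2*(n:ℝ) := by positivity
    linarith
  have hG1 : Real.Gamma ((n:ℝ) + α + 1) = rf (α+1) n * Real.Gamma (α+1) := by
    rw [show (n:ℝ) + α + 1 = (α+1) + (n:ℕ) by push_cast; ring]
    exact Gamma_rf hα1 n
  have hG2 : Real.Gamma (α+2) = (α+1) * Real.Gamma (α+1) := by
    rw [show α+2 = (α+1)+1 by ring]
    exact Real.Gamma_add_one (ne_of_gt hα1)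
  have hrf2 : rf ((α+1)/2) n * ((α+1)/2 + n) = (α+1)/2 * rf ((α+3)/2) n := by
    have h1 := rf_succ_right ((α+1)/2) n
    have h2 := rf_succ_left ((α+1)/2) n
    rw [show (α+1)/2 + 1 = (α+3)/2 by ring] at h2
    linarith [h1, h2]
  have hra : rf ((α+1)/2) n = (α+1) * rf ((α+3)/2) n / (2*(n:ℝ)+α+1) := by
    field_simp
    linarith [hrf2]
  have e1 : u ^ (2*(n:ℝ)+α+1) = (u^2)^n * u^(α+1) := by
    rw [show 2*(n:ℝ)+α+1 = ((2*n:ℕ):ℝ) + (α+1) by push_cast; ring, Real.rpow_add hu,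
      Real.rpow_natCast, pow_mul]
  have e2 : (2:ℝ) ^ (2*(n:ℝ)+α) = 4^n * 2^α := by
    rw [show 2*(n:ℝ)+α = ((2*n:ℕ):ℝ) + α by push_cast; ring, Real.rpow_add two_pos,
      Real.rpow_natCast, pow_mul]
    norm_num
  have e3 : (-(u^2)/4 : ℝ)^n = (-1)^n * (u^2)^n / 4^n := by
    rw [div_pow, neg_pow]
  have hΓ1 : Real.Gamma (α+1) ≠ 0 := ne_of_gt (Real.Gamma_pos_of_pos hα1)
  have hrfb : rf ((α+3)/2) n ≠ 0 := ne_of_gt (rf_pos (by linarith) n)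
  have hrf1 : rf (α+1) n ≠ 0 := ne_of_gt (rf_pos hα1 n)
  have hfac : (n.factorial : ℝ) ≠ 0 := Nat.cast_ne_zero.mpr n.factorial_ne_zero
  have h2α : (2:ℝ)^α ≠ 0 := ne_of_gt (Real.rpow_pos_of_pos two_pos α)
  rw [hG1, hG2, e1, e2, e3, hra]
  field_simp

open MeasureTheory in
/-- `∫_0^u J_α(t) dt = (u^{α+1}/2^α)·(1/Γ(α+2))·₁F₂((α+1)/2; α+1, (α+3)/2; −u²/4)`. -/
theorem integral_besselJ_hyp1F2 (α u : ℝ) (hα : -1 < α) (hu : 0 ≤ u) :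
    ∫ t in (0 : ℝ)..u, besselJ α t =
      u ^ (α + 1) / (2 : ℝ) ^ α * (1 / Real.Gamma (α + 2)) *
        hyp1F2 ((α + 1) / 2) (α + 1) ((α + 3) / 2) (-(u ^ 2) / 4) := by
  rcases hu.eq_or_lt with h0 | hu'
  · rw [← h0, intervalIntegral.integral_same, Real.zero_rpow (by linarith : α + 1 ≠ 0)]
    simp
  -- notation
  set c : ℕ → ℝ := fun m => (-1)^m / ((m.factorial:ℝ) * Real.Gamma ((m:ℝ) + α + 1)) with hc
  have hα1 : (0:ℝ) < α + 1 := by linarith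
  have hΓpos : ∀ m : ℕ, 0 < Real.Gamma ((m:ℝ) + α + 1) := fun m =>
    Real.Gamma_pos_of_pos (by have : (0:ℝ) ≤ m := Nat.cast_nonneg m; linarith)
  have hrm : ∀ m : ℕ, -1 < 2*(m:ℝ) + α := fun m => by
    have : (0:ℝ) ≤ 2*(m:ℝ) := by positivity
    linarith
  have hrm1 : ∀ m : ℕ, 0 < 2*(m:ℝ) + α + 1 := fun m => by
    have := hrm m; linarith
  -- value of the basic integral
  have hpow : ∀ r : ℝ, -1 < r →
      ∫ t in Set.Ioc (0:ℝ) u, (t/2)^r = u^(r+1)/((2:ℝ)^r*(r+1)) := by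
    intro r hr
    have hr1 : 0 < r + 1 := by linarith
    rw [← intervalIntegral.integral_of_le hu'.le]
    have hcong : ∀ t ∈ Set.uIcc (0:ℝ) u, (t/2)^r = t^r / (2:ℝ)^r := by
      intro t ht
      rw [Set.uIcc_of_le hu'.le] at ht
      exact Real.div_rpow ht.1 (by norm_num) r
    rw [intervalIntegral.integral_congr hcong]
    simp_rw [div_eq_mul_inv (_ ^ r)]
    rw [intervalIntegral.integral_mul_const, integral_rpow (Or.inl hr),
      Real.zero_rpow (ne_of_gt hr1)]
    rw [sub_zero, mul_comm ((2:ℝ)^r) (r+1), ← div_div, div_eq_mul_inv, div_eq_mul_inv]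
  -- integrability of each term
  have hint : ∀ m : ℕ, IntegrableOn (fun t => c m * (t/2)^(2*(m:ℝ)+α))
      (Set.Ioc (0:ℝ) u) volume := by
    intro m
    have h1 : IntegrableOn (fun t : ℝ => c m / (2:ℝ)^(2*(m:ℝ)+α) * t^(2*(m:ℝ)+α))
        (Set.Ioc 0 u) volume := by
      have h2 := (intervalIntegrable_iff_integrableOn_Ioc_of_le hu'.le).mp
        (intervalIntegral.intervalIntegrable_rpow' (a := 0) (b := u) (hrm m))
      exact h2.const_mul _
    apply h1.congr_fun ?_ measurableSet_Ioc
    intro t ht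
    simp only
    rw [Real.div_rpow ht.1.le (by norm_num)]
    ring
  -- value of each term integral
  have hval : ∀ m : ℕ, ∫ t in Set.Ioc (0:ℝ) u, c m * (t/2)^(2*(m:ℝ)+α) =
      c m * (u^(2*(m:ℝ)+α+1)/((2:ℝ)^(2*(m:ℝ)+α)*(2*(m:ℝ)+α+1))) := by
    intro m
    rw [MeasureTheory.integral_const_mul, hpow _ (hrm m)]
  -- value of the norm integrals
  have hnormval : ∀ m : ℕ, ∫ t in Set.Ioc (0:ℝ) u, ‖c m * (t/2)^(2*(m:ℝ)+α)‖ =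
      |c m| * (u^(2*(m:ℝ)+α+1)/((2:ℝ)^(2*(m:ℝ)+α)*(2*(m:ℝ)+α+1))) := by
    intro m
    have : ∀ t ∈ Set.Ioc (0:ℝ) u, ‖c m * (t/2)^(2*(m:ℝ)+α)‖
        = |c m| * (t/2)^(2*(m:ℝ)+α) := by
      intro t ht
      rw [Real.norm_eq_abs, abs_mul, abs_of_nonneg (Real.rpow_nonneg (by linarith [ht.1]) _)]
    rw [MeasureTheory.setIntegral_congr_fun measurableSet_Ioc this,
      MeasureTheory.integral_const_mul, hpow _ (hrm m)]
  -- summability of norm integrals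
  have hcabs : ∀ m : ℕ, |c m| = 1 / ((m.factorial:ℝ) * Real.Gamma ((m:ℝ) + α + 1)) := by
    intro m
    rw [hc]
    rw [abs_div, abs_pow, abs_neg, abs_one, one_pow,
      abs_of_pos (mul_pos (by positivity) (hΓpos m))]
  set A : ℕ → ℝ := fun m => |c m| * (u^(2*(m:ℝ)+α+1)/((2:ℝ)^(2*(m:ℝ)+α)*(2*(m:ℝ)+α+1)))
    with hA
  have hApos : ∀ m : ℕ, 0 < A m := by
    intro m
    rw [hA]
    simp only
    rw [hcabs m]
    have h1 := hΓpos m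
    have h2 := hrm1 m
    have h3 : (0:ℝ) < u^(2*(m:ℝ)+α+1) := Real.rpow_pos_of_pos hu' _
    have h4 : (0:ℝ) < (2:ℝ)^(2*(m:ℝ)+α) := Real.rpow_pos_of_pos two_pos _
    have h5 : (0:ℝ) < (m.factorial:ℝ) := by positivity
    exact mul_pos (div_pos one_pos (mul_pos h5 h1)) (div_pos h3 (mul_pos h4 h2))
  have hAsum : Summable A := by
    apply summable_of_ratio_norm_eventually_le (r := (1:ℝ)/2) (by norm_num)
    obtain ⟨N, hN⟩ := exists_nat_ge (max (u^2) (-α))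
    have hN1 : u^2 ≤ (N:ℝ) := le_trans (le_max_left _ _) hN
    have hN2 : -α ≤ (N:ℝ) := le_trans (le_max_right _ _) hN
    filter_upwards [eventually_ge_atTop N] with m hm
    have hmR : (N:ℝ) ≤ (m:ℝ) := Nat.cast_le.mpr hm
    -- A (m+1) = A m * Q m
    have hmα : (0:ℝ) < (m:ℝ) + α + 1 := by
      have : (0:ℝ) ≤ (m:ℝ) := Nat.cast_nonneg m
      linarith
    have hQ : A (m+1) = A m *
        (u^2 * (2*(m:ℝ)+α+1) / (4*((m:ℝ)+1)*((m:ℝ)+α+1)*(2*(m:ℝ)+α+3))) := by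
      rw [hA]
      simp only
      rw [hcabs m, hcabs (m+1)]
      have hfac : ((m+1).factorial : ℝ) = ((m:ℝ)+1) * (m.factorial:ℝ) := by
        rw [Nat.factorial_succ]; push_cast; ring
      have hcast : ((m+1:ℕ):ℝ) = (m:ℝ)+1 := by push_cast; ring
      rw [hcast, hfac]
      have hΓr : Real.Gamma (((m:ℝ)+1) + α + 1) = ((m:ℝ)+α+1) * Real.Gamma ((m:ℝ)+α+1) := by
        rw [show ((m:ℝ)+1)+α+1 = ((m:ℝ)+α+1)+1 by ring]
        exact Real.Gamma_add_one (ne_of_gt hmα)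
      rw [hΓr]
      have hu2 : u^(2*((m:ℝ)+1)+α+1) = u^2 * u^(2*(m:ℝ)+α+1) := by
        rw [show 2*((m:ℝ)+1)+α+1 = (((2:ℕ)):ℝ) + (2*(m:ℝ)+α+1) by push_cast; ring,
          Real.rpow_add hu', Real.rpow_natCast]
      have h22 : (2:ℝ)^(2*((m:ℝ)+1)+α) = 4 * (2:ℝ)^(2*(m:ℝ)+α) := by
        rw [show 2*((m:ℝ)+1)+α = (((2:ℕ)):ℝ) + (2*(m:ℝ)+α) by push_cast; ring,
          Real.rpow_add two_pos, Real.rpow_natCast]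
        norm_num
      rw [hu2, h22]
      have n1 : (m.factorial : ℝ) ≠ 0 := Nat.cast_ne_zero.mpr m.factorial_ne_zero
      have n2 : Real.Gamma ((m:ℝ)+α+1) ≠ 0 := ne_of_gt (hΓpos m)
      have n3 : (m:ℝ)+α+1 ≠ 0 := ne_of_gt hmα
      have n4 : 2*(m:ℝ)+α+1 ≠ 0 := ne_of_gt (hrm1 m)
      have n5 : 2*((m:ℝ)+1)+α+1 ≠ 0 := by
        have : (0:ℝ) ≤ (m:ℝ) := Nat.cast_nonneg m
        intro h; nlinarith
      have n6 : 2*(m:ℝ)+α+3 ≠ 0 := by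
        have : (0:ℝ) ≤ (m:ℝ) := Nat.cast_nonneg m
        intro h; nlinarith
      have n7 : (2:ℝ)^(2*(m:ℝ)+α) ≠ 0 := ne_of_gt (Real.rpow_pos_of_pos two_pos _)
      have n8 : (m:ℝ)+1 ≠ 0 := by positivity
      rw [show 2*((m:ℝ)+1)+α+1 = 2*(m:ℝ)+α+3 by ring]
      field_simp
      rw [mul_comm (m:ℝ) 2, div_mul_cancel_left₀ n4, one_div]
    rw [Real.norm_eq_abs, Real.norm_eq_abs, abs_of_pos (hApos _), abs_of_pos (hApos _), hQ]
    have hq1 : u^2 ≤ (m:ℝ)+1 := by linarith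
    have hq2 : (1:ℝ) ≤ (m:ℝ)+α+1 := by linarith
    have hq3 : (0:ℝ) < 2*(m:ℝ)+α+1 := hrm1 m
    have hq4 : (0:ℝ) < 2*(m:ℝ)+α+3 := by linarith
    have hQle : u^2 * (2*(m:ℝ)+α+1) / (4*((m:ℝ)+1)*((m:ℝ)+α+1)*(2*(m:ℝ)+α+3)) ≤ 1/2 := by
      rw [div_le_iff₀ (by positivity)]
      nlinarith [mul_le_mul_of_nonneg_right hq1 hq3.le, sq_nonneg u,
        mul_pos (mul_pos (by positivity : (0:ℝ) < (m:ℝ)+1) (by positivity : (0:ℝ) < (m:ℝ)+α+1)) hq4]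
    calc A m * (u^2 * (2*(m:ℝ)+α+1) / (4*((m:ℝ)+1)*((m:ℝ)+α+1)*(2*(m:ℝ)+α+3)))
        ≤ A m * (1/2) := mul_le_mul_of_nonneg_left hQle (hApos m).le
      _ = 1/2 * A m := by ring
  -- interchange sum and integral
  rw [intervalIntegral.integral_of_le hu'.le]
  have hinter := MeasureTheory.integral_tsum_of_summable_integral_norm
    (μ := volume.restrict (Set.Ioc (0:ℝ) u))
    (F := fun m (t : ℝ) => c m * (t/2)^(2*(m:ℝ)+α)) hint
    (hAsum.congr fun m => (hnormval m).symm)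
  have hL : ∫ t in Set.Ioc (0:ℝ) u, besselJ α t
      = ∑' m : ℕ, ∫ t in Set.Ioc (0:ℝ) u, c m * (t/2)^(2*(m:ℝ)+α) := by
    rw [hinter]
    rfl
  rw [hL]
  have hLval : (∑' m : ℕ, ∫ t in Set.Ioc (0:ℝ) u, c m * (t/2)^(2*(m:ℝ)+α))
      = ∑' m : ℕ, c m * (u^(2*(m:ℝ)+α+1)/((2:ℝ)^(2*(m:ℝ)+α)*(2*(m:ℝ)+α+1))) :=
    tsum_congr fun m => hval m
  rw [hLval, hyp1F2, ← tsum_mul_left]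
  exact tsum_congr fun n => term_eq α u hα hu' n
end
end

section
/- Fix α > −2. There exist δ ∈ (0,1), M₀ > 0, N₀ ≥ 1 and C > 0 such that for all integers N ≥ N₀ and all real x with M₀/N ≤ x ≤ δ·N, |x^{α/2}·e^{−x/2}·L_N^{(α)}(x)| ≤ C · N^{α/2} · (N·x)^{−1/4}. -/
open Filter Finset

noncomputable section

/-- Generalized Laguerre polynomial `L_N^{(α)}(x)`. -/
noncomputable def laguerreL (N : ℕ) (α : ℝ) (x : ℝ) : ℝ :=
  ∑ k ∈ Finset.range (N + 1), (-1) ^ k *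
    (Real.Gamma ((N : ℝ) + α + 1) /
      (Real.Gamma ((k : ℝ) + α + 1) * ((N - k).factorial : ℝ))) *
    x ^ k / (k.factorial : ℝ)

namespace HardEdge

/-- coefficients of the Laguerre polynomial -/
def c (α : ℝ) (N k : ℕ) : ℝ :=
  (-1) ^ k * (Real.Gamma ((N : ℝ) + α + 1) /
      (Real.Gamma ((k : ℝ) + α + 1) * ((N - k).factorial : ℝ))) / (k.factorial : ℝ)

def P (α : ℝ) (N : ℕ) (x : ℝ) : ℝ := ∑ k ∈ Finset.range (N + 1), c α N k * x ^ k

lemma laguerre_eq (α : ℝ) (N : ℕ) (x : ℝ) : laguerreL N α x = P α N x := by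
  unfold laguerreL P c
  exact Finset.sum_congr rfl fun k _ => by ring

/-- the coefficient recurrence -/
lemma c_rec (α : ℝ) (N : ℕ) (k : ℕ) (hk : k < N) :
    ((k : ℝ) + 1) * ((k : ℝ) + α + 1) * c α N (k + 1) = ((k : ℝ) - N) * c α N k := by
  by_cases h0 : ((k : ℝ) + α + 1) = 0
  · -- then Γ(k+α+1) = Γ(0) = 0, so c α N k = 0, and LHS has zero factor
    have : Real.Gamma ((k : ℝ) + α + 1) = 0 := by rw [h0, Real.Gamma_zero]
    have hc : c α N k = 0 := by
      unfold c; rw [this]; simp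
    rw [h0, hc]; ring
  · have hΓ : Real.Gamma (((k : ℕ) + 1 : ℕ) + α + 1) = ((k : ℝ) + α + 1) * Real.Gamma ((k : ℝ) + α + 1) := by
      push_cast
      have : (k : ℝ) + 1 + α + 1 = ((k : ℝ) + α + 1) + 1 := by ring
      rw [this, Real.Gamma_add_one h0]
    by_cases hg : Real.Gamma ((k : ℝ) + α + 1) = 0
    · have hc : c α N k = 0 := by unfold c; rw [hg]; simp
      have hc' : c α N (k + 1) = 0 := by unfold c; rw [hΓ, hg]; simp
      rw [hc, hc']; ring
    · have hfac : ((N - k).factorial : ℝ) = ((N - k : ℕ) : ℝ) * ((N - (k + 1)).factorial : ℝ) := by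
        have h1 : N - k = (N - (k + 1)) + 1 := by omega
        rw [h1, Nat.factorial_succ]
        push_cast
        ring
      have hcast : ((N - k : ℕ) : ℝ) = (N : ℝ) - k := by
        rw [Nat.cast_sub hk.le]
      unfold c
      rw [hΓ, hfac, hcast, Nat.factorial_succ]
      have hkf : ((k).factorial : ℝ) ≠ 0 := by positivity
      have hkf2 : ((N - (k+1)).factorial : ℝ) ≠ 0 := by positivity
      have hNk : (N : ℝ) - k ≠ 0 := by
        have : (k : ℝ) < N := by exact_mod_cast hk
        linarith
      push_cast
      field_simp
      ring

def P1 (α : ℝ) (N : ℕ) (x : ℝ) : ℝ :=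
  ∑ k ∈ Finset.range (N + 1), c α N k * ((k : ℝ) * x ^ (k - 1))

def P2 (α : ℝ) (N : ℕ) (x : ℝ) : ℝ :=
  ∑ k ∈ Finset.range (N + 1), c α N k * ((k : ℝ) * (((k - 1 : ℕ) : ℝ) * x ^ (k - 2)))

lemma hasDerivAt_P (α : ℝ) (N : ℕ) (x : ℝ) : HasDerivAt (P α N) (P1 α N x) x := by
  apply HasDerivAt.fun_sum
  intro k _
  exact (hasDerivAt_pow k x).const_mul (c α N k)

lemma hasDerivAt_P1 (α : ℝ) (N : ℕ) (x : ℝ) : HasDerivAt (P1 α N) (P2 α N x) x := by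
  apply HasDerivAt.fun_sum
  intro k _
  have h := ((hasDerivAt_pow (k - 1) x).const_mul (k : ℝ)).const_mul (c α N k)
  convert h using 1
  all_goals rfl

/-- Laguerre ODE -/
lemma ode (α : ℝ) (N : ℕ) (x : ℝ) :
    x * P2 α N x + (α + 1 - x) * P1 α N x + (N : ℝ) * P α N x = 0 := by
  have key : x * P2 α N x + (α + 1 - x) * P1 α N x + (N : ℝ) * P α N x =
      (∑ k ∈ Finset.range (N + 1), ((k : ℝ) * ((k : ℝ) + α)) * c α N k * x ^ (k - 1)) +
      (∑ k ∈ Finset.range (N + 1), ((N : ℝ) - k) * c α N k * x ^ k) := by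
    unfold P P1 P2
    rw [Finset.mul_sum, Finset.mul_sum, Finset.mul_sum, ← Finset.sum_add_distrib,
      ← Finset.sum_add_distrib, ← Finset.sum_add_distrib]
    apply Finset.sum_congr rfl
    intro k _
    match k with
    | 0 => simp
    | 1 => push_cast; simp; ring
    | (m + 2) =>
      have h1 : (m + 2) - 1 = m + 1 := rfl
      have h2 : (m + 2) - 2 = m := rfl
      rw [h1, h2]
      push_cast
      ring
  rw [key]
  have e1 : (∑ k ∈ Finset.range (N + 1), ((k : ℝ) * ((k : ℝ) + α)) * c α N k * x ^ (k - 1)) =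
      ∑ j ∈ Finset.range N, (((j : ℝ)) - N) * c α N j * x ^ j := by
    rw [Finset.sum_range_succ']
    simp only [Nat.cast_zero, Nat.cast_add, Nat.cast_one]
    have : (0 : ℝ) * ((0 : ℝ) + α) * c α N 0 * x ^ (0 - 1) = 0 := by ring
    rw [this, add_zero]
    apply Finset.sum_congr rfl
    intro j hj
    have hjN : j < N := Finset.mem_range.mp hj
    have h1 : (j + 1) - 1 = j := rfl
    rw [h1]
    have := c_rec α N j hjN
    have e : ((j : ℝ) + 1) * ((j : ℝ) + 1 + α) * c α N (j + 1) = ((j : ℝ) - N) * c α N j := by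
      rw [← this]; ring
    calc ((j : ℝ) + 1) * (((j : ℝ) + 1) + α) * c α N (j + 1) * x ^ j
        = (((j : ℝ) + 1) * ((j : ℝ) + 1 + α) * c α N (j + 1)) * x ^ j := by ring
      _ = (((j : ℝ) - N) * c α N j) * x ^ j := by rw [e]
      _ = ((j : ℝ) - N) * c α N j * x ^ j := by ring
  have e2 : (∑ k ∈ Finset.range (N + 1), ((N : ℝ) - k) * c α N k * x ^ k) =
      ∑ j ∈ Finset.range N, ((N : ℝ) - j) * c α N j * x ^ j := by
    rw [Finset.sum_range_succ]
    simp
  rw [e1, e2, ← Finset.sum_add_distrib]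
  apply Finset.sum_eq_zero
  intro j _
  ring


def u (α : ℝ) (N : ℕ) (x : ℝ) : ℝ :=
  x ^ ((α + 1) / 2 : ℝ) * Real.exp (-x / 2) * P α N x

def u1 (α : ℝ) (N : ℕ) (x : ℝ) : ℝ :=
  x ^ ((α + 1) / 2 : ℝ) * Real.exp (-x / 2) *
    (P1 α N x + ((α + 1) / 2 * x⁻¹ - 1 / 2) * P α N x)

def bb (α : ℝ) (N : ℕ) : ℝ := (N : ℝ) + (α + 1) / 2
def g (α : ℝ) : ℝ := (1 - α ^ 2) / 4

def qq (α : ℝ) (N : ℕ) (x : ℝ) : ℝ := -(1/4) + bb α N * x⁻¹ + g α * (x⁻¹) ^ 2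
def qd (α : ℝ) (N : ℕ) (x : ℝ) : ℝ := -(bb α N * (x⁻¹) ^ 2) - 2 * g α * (x⁻¹) ^ 3
def qdd (α : ℝ) (N : ℕ) (x : ℝ) : ℝ := 2 * bb α N * (x⁻¹) ^ 3 + 6 * g α * (x⁻¹) ^ 4

lemma hasDerivAt_qq (α : ℝ) (N : ℕ) (x : ℝ) (hx : x ≠ 0) :
    HasDerivAt (qq α N) (qd α N x) x := by
  have hinv := hasDerivAt_inv hx
  have h := ((hinv.const_mul (bb α N)).add ((hinv.pow 2).const_mul (g α))).const_add (-(1/4))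
  convert h using 1
  any_goals with_reducible_and_instances rfl
  · unfold qq; funext y; simp only [Pi.add_apply, Pi.pow_apply]; ring
  · unfold qd; push_cast; field_simp; ring

lemma hasDerivAt_qd (α : ℝ) (N : ℕ) (x : ℝ) (hx : x ≠ 0) :
    HasDerivAt (qd α N) (qdd α N x) x := by
  have hinv := hasDerivAt_inv hx
  have h := (((hinv.pow 2).const_mul (bb α N)).neg).sub ((hinv.pow 3).const_mul (2 * g α))
  convert h using 1
  any_goals with_reducible_and_instances rfl
  · rfl
  unfold qdd; push_cast; field_simp; ring

lemma hasDerivAt_exp_half (x : ℝ) :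
    HasDerivAt (fun y : ℝ => Real.exp (-y / 2)) (Real.exp (-x / 2) * (-1 / 2)) x := by
  have h : HasDerivAt (fun y : ℝ => -y / 2) (-1 / 2) x := by
    have := ((hasDerivAt_id x).neg).div_const 2
    convert this using 1
    all_goals rfl
  exact h.exp

lemma hasDerivAt_u (α : ℝ) (N : ℕ) (x : ℝ) (hx : 0 < x) :
    HasDerivAt (u α N) (u1 α N x) x := by
  have h1 : HasDerivAt (fun y : ℝ => y ^ ((α + 1) / 2 : ℝ))
      (((α + 1) / 2) * x ^ ((α + 1) / 2 - 1 : ℝ)) x :=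
    Real.hasDerivAt_rpow_const (Or.inl hx.ne')
  have h2 := hasDerivAt_exp_half x
  have h := (h1.mul h2).mul (hasDerivAt_P α N x)
  convert h using 1
  any_goals with_reducible_and_instances rfl
  · rfl
  simp only [Pi.mul_apply, Pi.pow_apply, Pi.div_apply]
  have hr : x ^ ((α + 1) / 2 - 1 : ℝ) = x ^ ((α + 1) / 2 : ℝ) * x⁻¹ := by
    rw [Real.rpow_sub hx, Real.rpow_one, div_eq_mul_inv]
  rw [hr]
  unfold u1
  ring

lemma hasDerivAt_u1 (α : ℝ) (N : ℕ) (x : ℝ) (hx : 0 < x) :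
    HasDerivAt (u1 α N) (-(qq α N x) * u α N x) x := by
  have hx' : x ≠ 0 := hx.ne'
  have h1 : HasDerivAt (fun y : ℝ => y ^ ((α + 1) / 2 : ℝ))
      (((α + 1) / 2) * x ^ ((α + 1) / 2 - 1 : ℝ)) x :=
    Real.hasDerivAt_rpow_const (Or.inl hx')
  have h2 := hasDerivAt_exp_half x
  have hG : HasDerivAt (fun y => P1 α N y + ((α + 1) / 2 * y⁻¹ - 1 / 2) * P α N y)
      (P2 α N x + ((((α + 1) / 2) * (-(x ^ 2)⁻¹)) * P α N x
        + ((α + 1) / 2 * x⁻¹ - 1 / 2) * P1 α N x)) x := by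
    exact (hasDerivAt_P1 α N x).add
      ((((hasDerivAt_inv hx').const_mul ((α + 1) / 2)).sub_const (1/2)).mul (hasDerivAt_P α N x))
  have h := (h1.mul h2).mul hG
  convert h using 1
  any_goals with_reducible_and_instances rfl
  · rfl
  simp only [Pi.mul_apply, Pi.pow_apply, Pi.div_apply]
  have hr : x ^ ((α + 1) / 2 - 1 : ℝ) = x ^ ((α + 1) / 2 : ℝ) * x⁻¹ := by
    rw [Real.rpow_sub hx, Real.rpow_one, div_eq_mul_inv]
  rw [hr]
  have hP2 : P2 α N x = ((x - α - 1) * P1 α N x - (N : ℝ) * P α N x) / x := by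
    have := ode α N x
    field_simp
    linarith
  rw [hP2]
  unfold u qq bb g
  field_simp
  ring

def A (α : ℝ) (N : ℕ) (x : ℝ) : ℝ := u1 α N x + qd α N x * u α N x / (4 * qq α N x)

def Ad (α : ℝ) (N : ℕ) (x : ℝ) : ℝ :=
  -(qq α N x) * u α N x +
    ((qdd α N x * u α N x + qd α N x * u1 α N x) * (4 * qq α N x)
      - qd α N x * u α N x * (4 * qd α N x)) / (4 * qq α N x) ^ 2

lemma hasDerivAt_A (α : ℝ) (N : ℕ) (x : ℝ) (hx : 0 < x) (hq : qq α N x ≠ 0) :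
    HasDerivAt (A α N) (Ad α N x) x := by
  have hx' : x ≠ 0 := hx.ne'
  have h2 : HasDerivAt (fun y => qd α N y * u α N y / (4 * qq α N y))
      (((qdd α N x * u α N x + qd α N x * u1 α N x) * (4 * qq α N x)
        - qd α N x * u α N x * (4 * qd α N x)) / (4 * qq α N x) ^ 2) x := by
    exact ((hasDerivAt_qd α N x hx').mul (hasDerivAt_u α N x hx)).div
      ((hasDerivAt_qq α N x hx').const_mul 4) (by simpa using hq)
  exact (hasDerivAt_u1 α N x hx).add h2

def B (α : ℝ) (N : ℕ) (x : ℝ) : ℝ := qq α N x * (u α N x) ^ 2 + (A α N x) ^ 2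

def Bd (α : ℝ) (N : ℕ) (x : ℝ) : ℝ :=
  qd α N x * (u α N x) ^ 2 + qq α N x * (2 * u α N x * u1 α N x) + 2 * A α N x * Ad α N x

lemma hasDerivAt_B (α : ℝ) (N : ℕ) (x : ℝ) (hx : 0 < x) (hq : qq α N x ≠ 0) :
    HasDerivAt (B α N) (Bd α N x) x := by
  have hx' : x ≠ 0 := hx.ne'
  have h := ((hasDerivAt_qq α N x hx').mul ((hasDerivAt_u α N x hx).pow 2)).add
    ((hasDerivAt_A α N x hx hq).pow 2)
  convert h using 1
  any_goals with_reducible_and_instances rfl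
  · rfl
  simp only [Pi.mul_apply, Pi.pow_apply, Pi.div_apply]
  unfold Bd
  push_cast
  ring

def Q (α : ℝ) (N : ℕ) (x : ℝ) : ℝ := (B α N x) ^ 2 / qq α N x

def Qd (α : ℝ) (N : ℕ) (x : ℝ) : ℝ :=
  (4 * qq α N x * qdd α N x - 5 * qd α N x ^ 2) / (4 * qq α N x ^ 3)
    * u α N x * A α N x * B α N x

lemma hasDerivAt_Q (α : ℝ) (N : ℕ) (x : ℝ) (hx : 0 < x) (hq : qq α N x ≠ 0) :
    HasDerivAt (Q α N) (Qd α N x) x := by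
  have hx' : x ≠ 0 := hx.ne'
  have h := (((hasDerivAt_B α N x hx hq).pow 2)).div (hasDerivAt_qq α N x hx') hq
  convert h using 1
  any_goals with_reducible_and_instances rfl
  · rfl
  simp only [Pi.mul_apply, Pi.pow_apply, Pi.div_apply]
  -- key algebraic identity
  unfold Qd Bd B A Ad
  set U := u α N x
  set V := u1 α N x
  set q := qq α N x
  set d := qd α N x
  set e := qdd α N x
  push_cast
  field_simp
  ring


/-- Gautschi-type upper bound from log-convexity -/
lemma gautschi (x s : ℝ) (hx : 0 < x) (hs0 : 0 ≤ s) (hs1 : s ≤ 1) :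
    Real.Gamma (x + s) ≤ Real.Gamma x * x ^ s := by
  rcases eq_or_lt_of_le hs0 with h | h
  · rw [← h, Real.rpow_zero, add_zero, mul_one]
  have hΓx : 0 < Real.Gamma x := Real.Gamma_pos_of_pos hx
  have hΓxs : 0 < Real.Gamma (x + s) := Real.Gamma_pos_of_pos (by linarith)
  have hconv := Real.convexOn_log_Gamma.2 (Set.mem_Ioi.mpr hx)
    (Set.mem_Ioi.mpr (by linarith : (0:ℝ) < x + 1)) (by linarith : (0:ℝ) ≤ 1 - s) hs0
    (by ring)
  simp only [smul_eq_mul, Function.comp_apply] at hconv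
  have harg : (1 - s) * x + s * (x + 1) = x + s := by ring
  rw [harg] at hconv
  have hΓ1 : Real.Gamma (x + 1) = x * Real.Gamma x := Real.Gamma_add_one hx.ne'
  rw [hΓ1, Real.log_mul hx.ne' hΓx.ne'] at hconv
  have : Real.log (Real.Gamma (x + s)) ≤ Real.log (Real.Gamma x) + s * Real.log x := by
    nlinarith [hconv]
  calc Real.Gamma (x + s) = Real.exp (Real.log (Real.Gamma (x + s))) := (Real.exp_log hΓxs).symm
    _ ≤ Real.exp (Real.log (Real.Gamma x) + s * Real.log x) := Real.exp_le_exp.mpr this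
    _ = Real.Gamma x * x ^ s := by
        rw [Real.exp_add, Real.exp_log hΓx, Real.rpow_def_of_pos hx]
        ring_nf

/-- Γ(t) ≥ 1 for t ≥ 2 -/
lemma one_le_Gamma (t : ℝ) (ht : 2 ≤ t) : 1 ≤ Real.Gamma t := by
  rcases eq_or_lt_of_le ht with h | h
  · rw [← h, Real.Gamma_two]
  have hΓt : 0 < Real.Gamma t := Real.Gamma_pos_of_pos (by linarith)
  have hne : t - 1 ≠ 0 := by linarith
  have hb : (0:ℝ) < 1 / (t - 1) := div_pos one_pos (by linarith)
  have ha : (0:ℝ) ≤ (t - 2) / (t - 1) := by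
    apply div_nonneg <;> linarith
  have hconv := Real.convexOn_log_Gamma.2 (Set.mem_Ioi.mpr (by norm_num : (0:ℝ) < 1))
    (Set.mem_Ioi.mpr (by linarith : (0:ℝ) < t)) ha hb.le
    (by rw [← add_div, div_eq_one_iff_eq hne]; ring)
  simp only [smul_eq_mul, Function.comp_apply] at hconv
  have harg : (t - 2) / (t - 1) * 1 + 1 / (t - 1) * t = 2 := by
    field_simp
    ring
  rw [harg, Real.Gamma_one, Real.log_one, Real.Gamma_two, Real.log_one, mul_zero] at hconv
  have : 0 ≤ Real.log (Real.Gamma t) := by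
    nlinarith [hconv]
  calc (1:ℝ) = Real.exp 0 := Real.exp_zero.symm
    _ ≤ Real.exp (Real.log (Real.Gamma t)) := Real.exp_le_exp.mpr this
    _ = Real.Gamma t := Real.exp_log hΓt

/-- uniform positive lower bound for Γ on [β, ∞) -/
lemma gamma_lower (β : ℝ) (hβ : 0 < β) : ∃ c > 0, ∀ t, β ≤ t → c ≤ Real.Gamma t := by
  have hcont : ContinuousOn Real.Gamma (Set.Icc β (β + 2)) := by
    intro t ht
    have ht0 : 0 < t := lt_of_lt_of_le hβ ht.1
    apply ContinuousAt.continuousWithinAt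
    refine (Real.differentiableAt_Gamma (fun m => ?_)).continuousAt
    intro hc
    have h2 : (0:ℝ) ≤ (m:ℝ) := Nat.cast_nonneg m
    rw [hc] at ht0; linarith
  have hne : (Set.Icc β (β + 2)).Nonempty := ⟨β, by constructor <;> linarith⟩
  obtain ⟨t₀, ht₀mem, ht₀min⟩ := (isCompact_Icc).exists_isMinOn hne hcont
  have hc₁ : 0 < Real.Gamma t₀ := Real.Gamma_pos_of_pos (lt_of_lt_of_le hβ ht₀mem.1)
  refine ⟨min (Real.Gamma t₀) 1, by positivity, fun t ht => ?_⟩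
  rcases le_or_gt t (β + 2) with h | h
  · exact le_trans (min_le_left _ _) (ht₀min ⟨ht, h⟩)
  · exact le_trans (min_le_right _ _) (one_le_Gamma t (by linarith))

/-- iterated Gautschi -/
lemma Gamma_add_nat (n : ℕ) (x : ℝ) (hx : 1 ≤ x) :
    Real.Gamma (x + n) ≤ Real.Gamma x * (x + n) ^ n := by
  induction n with
  | zero => simp
  | succ n ih =>
    have hΓx : 0 < Real.Gamma x := Real.Gamma_pos_of_pos (by linarith)
    have hxn : (0:ℝ) < x + n := by positivity
    have h1 : Real.Gamma (x + (n + 1 : ℕ)) = (x + n) * Real.Gamma (x + n) := by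
      push_cast
      rw [show x + ((n : ℝ) + 1) = (x + n) + 1 by ring, Real.Gamma_add_one hxn.ne']
    rw [h1]
    push_cast
    calc (x + n) * Real.Gamma (x + n) ≤ (x + n) * (Real.Gamma x * (x + n) ^ n) := by
          apply mul_le_mul_of_nonneg_left ih hxn.le
      _ ≤ (x + (n + 1)) * (Real.Gamma x * (x + (n + 1)) ^ n) := by
          gcongr
          all_goals linarith
      _ = Real.Gamma x * (x + (n + 1)) ^ (n + 1) := by ring

/-- Gamma ratio bound: Γ(N+α+1) ≤ C N^α N! -/
lemma gamma_ratio (α : ℝ) (hα : -2 < α) :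
    ∃ C > 0, ∀ N : ℕ, 2 ≤ N →
      Real.Gamma ((N : ℝ) + α + 1) ≤ C * (N : ℝ) ^ α * (N.factorial : ℝ) := by
  set m : ℕ := ⌊α + 2⌋₊ with hm
  set s : ℝ := α + 2 - m with hs
  have hα2 : (0:ℝ) < α + 2 := by linarith
  have hs0 : 0 ≤ s := by
    have := Nat.floor_le hα2.le
    simp only [hs]; linarith
  have hs1 : s ≤ 1 := by
    have := Nat.lt_floor_add_one (α + 2)
    simp only [hs]; push_cast at this ⊢; linarith
  refine ⟨2 * ((m : ℝ) + 1) ^ (α + 2 : ℝ), by positivity, fun N hN => ?_⟩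
  obtain ⟨M, rfl⟩ : ∃ M, N = M + 2 := ⟨N - 2, by omega⟩
  set y : ℝ := (M : ℝ) + 1 with hy
  have hy1 : (1:ℝ) ≤ y := by rw [hy]; have := Nat.cast_nonneg (α := ℝ) M; linarith
  have hym : (0:ℝ) < y + m := by linarith
  have key : ((M + 2 : ℕ) : ℝ) + α + 1 = (y + m) + s := by
    push_cast [hy, hs]; ring
  have step1 : Real.Gamma ((y + m) + s) ≤ Real.Gamma (y + m) * (y + m) ^ s :=
    gautschi (y + m) s hym hs0 hs1
  have step2 : Real.Gamma (y + m) ≤ Real.Gamma y * (y + m) ^ m := Gamma_add_nat m y hy1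
  have hΓy : Real.Gamma y = (M.factorial : ℝ) := by
    rw [hy, Real.Gamma_nat_eq_factorial]
  have hrp : (0:ℝ) ≤ (y + m) ^ s := Real.rpow_nonneg hym.le s
  have chain : Real.Gamma (((M + 2 : ℕ) : ℝ) + α + 1) ≤ (M.factorial : ℝ) * (y + m) ^ (α + 2 : ℝ) := by
    rw [key]
    calc Real.Gamma ((y + m) + s) ≤ Real.Gamma (y + m) * (y + m) ^ s := step1
      _ ≤ (Real.Gamma y * (y + m) ^ m) * (y + m) ^ s := by
          apply mul_le_mul_of_nonneg_right step2 hrp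
      _ = (M.factorial : ℝ) * ((y + m) ^ (m : ℝ) * (y + m) ^ s) := by
          rw [hΓy, Real.rpow_natCast]; ring
      _ = (M.factorial : ℝ) * (y + m) ^ (α + 2 : ℝ) := by
          rw [← Real.rpow_add hym]
          congr 1
          simp [hs]
  have hNpos : (0:ℝ) < ((M + 2 : ℕ) : ℝ) := by positivity
  have hbase : y + m ≤ ((m : ℝ) + 1) * ((M + 2 : ℕ) : ℝ) := by
    push_cast [hy]
    nlinarith [Nat.cast_nonneg (α := ℝ) m, Nat.cast_nonneg (α := ℝ) M]
  have step3 : (y + m) ^ (α + 2 : ℝ) ≤ ((m : ℝ) + 1) ^ (α + 2 : ℝ) * ((M + 2 : ℕ) : ℝ) ^ (α + 2 : ℝ) := by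
    rw [← Real.mul_rpow (by positivity) (by positivity)]
    exact Real.rpow_le_rpow hym.le hbase (by linarith)
  have step4 : ((M + 2 : ℕ) : ℝ) ^ (α + 2 : ℝ) = ((M + 2 : ℕ) : ℝ) ^ α * ((M + 2 : ℕ) : ℝ) ^ 2 := by
    rw [show (α + 2 : ℝ) = α + (2:ℕ) by push_cast; ring, Real.rpow_add hNpos, Real.rpow_natCast]
  have hfact : ((M + 2).factorial : ℝ) = ((M + 2 : ℕ) : ℝ) * ((M + 1 : ℕ) : ℝ) * (M.factorial : ℝ) := by
    rw [show M + 2 = (M + 1) + 1 by ring, Nat.factorial_succ, Nat.factorial_succ]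
    push_cast; ring
  have hfin : (M.factorial : ℝ) * ((M + 2 : ℕ) : ℝ) ^ 2 ≤ 2 * ((M + 2).factorial : ℝ) := by
    rw [hfact]
    have hMf : (0:ℝ) ≤ (M.factorial : ℝ) := by positivity
    push_cast
    have h1 : ((M:ℝ)+2)^2 ≤ 2*(((M:ℝ)+2)*((M:ℝ)+1)) := by nlinarith [Nat.cast_nonneg (α := ℝ) M]
    nlinarith [mul_le_mul_of_nonneg_left h1 hMf]
  calc Real.Gamma (((M + 2 : ℕ) : ℝ) + α + 1)
      ≤ (M.factorial : ℝ) * (y + m) ^ (α + 2 : ℝ) := chain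
    _ ≤ (M.factorial : ℝ) * (((m : ℝ) + 1) ^ (α + 2 : ℝ) * (((M + 2 : ℕ) : ℝ) ^ α * ((M + 2 : ℕ) : ℝ) ^ 2)) := by
        rw [← step4]
        apply mul_le_mul_of_nonneg_left (le_trans step3 (le_of_eq (by rw [step4]))) (by positivity)
    _ = ((m : ℝ) + 1) ^ (α + 2 : ℝ) * ((M + 2 : ℕ) : ℝ) ^ α * ((M.factorial : ℝ) * ((M + 2 : ℕ) : ℝ) ^ 2) := by ring
    _ ≤ ((m : ℝ) + 1) ^ (α + 2 : ℝ) * ((M + 2 : ℕ) : ℝ) ^ α * (2 * ((M + 2).factorial : ℝ)) := by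
        apply mul_le_mul_of_nonneg_left hfin
        positivity
    _ = 2 * ((m : ℝ) + 1) ^ (α + 2 : ℝ) * ((M + 2 : ℕ) : ℝ) ^ α * ((M + 2).factorial : ℝ) := by ring


lemma coeff_bound (α : ℝ) (hα : -2 < α) :
    ∃ D > 0, ∀ N : ℕ, 2 ≤ N → ∀ k : ℕ, k ≤ N →
      |c α N k| ≤ D * (N : ℝ) ^ α * (N.choose k : ℝ) := by
  obtain ⟨C, hC, hratio⟩ := gamma_ratio α hα
  obtain ⟨c₂, hc₂, hlow⟩ := gamma_lower (α + 2) (by linarith)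
  have hipos : (0:ℝ) < if Real.Gamma (α + 1) = 0 then c₂ else |Real.Gamma (α + 1)| := by
    split
    · exact hc₂
    · next h => exact abs_pos.mpr h
  set d := min c₂ (if Real.Gamma (α + 1) = 0 then c₂ else |Real.Gamma (α + 1)|) with hd
  have hdpos : 0 < d := lt_min hc₂ hipos
  refine ⟨C / d, by positivity, ?_⟩
  intro N hN k hk
  have hN2 : (2:ℝ) ≤ (N:ℝ) := by exact_mod_cast hN
  have hΓN : 0 < Real.Gamma ((N:ℝ) + α + 1) := Real.Gamma_pos_of_pos (by linarith)
  have hNα : (0:ℝ) ≤ (N:ℝ) ^ α := Real.rpow_nonneg (by linarith) α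
  by_cases hg : Real.Gamma ((k:ℝ) + α + 1) = 0
  · have hzero : c α N k = 0 := by unfold c; rw [hg]; simp
    rw [hzero, abs_zero]
    positivity
  · have hlb : d ≤ |Real.Gamma ((k:ℝ) + α + 1)| := by
      rcases Nat.eq_zero_or_pos k with rfl | hk1
      · have he : ((0:ℕ):ℝ) + α + 1 = α + 1 := by push_cast; ring
        rw [he] at hg ⊢
        rw [hd, if_neg hg]
        exact min_le_right _ _
      · have hge : α + 2 ≤ (k:ℝ) + α + 1 := by
          have : (1:ℝ) ≤ (k:ℝ) := by exact_mod_cast hk1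
          linarith
        calc d ≤ c₂ := min_le_left _ _
          _ ≤ Real.Gamma ((k:ℝ) + α + 1) := hlow _ hge
          _ ≤ |Real.Gamma ((k:ℝ) + α + 1)| := le_abs_self _
    have hfk : (0:ℝ) < (k.factorial : ℝ) := by positivity
    have hfNk : (0:ℝ) < ((N - k).factorial : ℝ) := by positivity
    have habs : |c α N k| = Real.Gamma ((N:ℝ) + α + 1) /
        (|Real.Gamma ((k:ℝ) + α + 1)| * ((N - k).factorial : ℝ) * (k.factorial : ℝ)) := by
      unfold c
      rw [abs_div, abs_mul, abs_div, abs_mul, abs_pow, abs_neg, abs_one, one_pow, one_mul,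
        abs_of_pos hΓN, Nat.abs_cast, Nat.abs_cast, div_div]
    have h1 : |c α N k| ≤ (C * (N:ℝ) ^ α * (N.factorial : ℝ)) /
        (d * ((N - k).factorial : ℝ) * (k.factorial : ℝ)) := by
      rw [habs]
      apply div_le_div₀ (by positivity) (hratio N hN) (by positivity)
      apply mul_le_mul_of_nonneg_right (mul_le_mul_of_nonneg_right hlb hfNk.le) hfk.le
    refine le_trans h1 (le_of_eq ?_)
    have hchoose : (N.choose k : ℝ) * (k.factorial : ℝ) * ((N - k).factorial : ℝ) =
        (N.factorial : ℝ) := by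
      exact_mod_cast congrArg (Nat.cast : ℕ → ℝ) (Nat.choose_mul_factorial_mul_factorial hk)
    field_simp
    linear_combination -hchoose

lemma sum_choose_pow (N : ℕ) (a : ℝ) :
    ∑ k ∈ Finset.range (N + 1), (N.choose k : ℝ) * a ^ k = (1 + a) ^ N := by
  conv_rhs => rw [add_comm 1 a, add_pow]
  apply Finset.sum_congr rfl
  intro k _
  rw [one_pow]
  ring

lemma sum_choose_deriv (N : ℕ) (a : ℝ) :
    ∑ k ∈ Finset.range (N + 1), (N.choose k : ℝ) * ((k : ℝ) * a ^ (k - 1)) =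
      (N : ℝ) * (1 + a) ^ (N - 1) := by
  have h1 : HasDerivAt (fun y : ℝ => (1 + y) ^ N) ((N : ℝ) * (1 + a) ^ (N - 1)) a := by
    have h := ((hasDerivAt_id a).const_add 1).pow N
    simp at h; exact h
  have h2 : HasDerivAt (fun y : ℝ => ∑ k ∈ Finset.range (N + 1), (N.choose k : ℝ) * y ^ k)
      (∑ k ∈ Finset.range (N + 1), (N.choose k : ℝ) * ((k : ℝ) * a ^ (k - 1))) a :=
    HasDerivAt.fun_sum fun k _ => (hasDerivAt_pow k a).const_mul _
  have hfun : (fun y : ℝ => (1 + y) ^ N) =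
      (fun y : ℝ => ∑ k ∈ Finset.range (N + 1), (N.choose k : ℝ) * y ^ k) := by
    funext y
    rw [sum_choose_pow]
  rw [hfun] at h1
  exact (h2.unique h1)

lemma P_endpoint (α : ℝ) (hα : -2 < α) :
    ∃ D > 0, ∀ N : ℕ, 2 ≤ N → ∀ a : ℝ, 0 < a →
      |P α N a| ≤ D * (N : ℝ) ^ α * (1 + a) ^ N ∧
      |P1 α N a| ≤ D * (N : ℝ) ^ α * (N : ℝ) * (1 + a) ^ N := by
  obtain ⟨D, hD, hcoef⟩ := coeff_bound α hα
  refine ⟨D, hD, fun N hN a ha => ⟨?_, ?_⟩⟩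
  · calc |P α N a| ≤ ∑ k ∈ Finset.range (N + 1), |c α N k * a ^ k| :=
        Finset.abs_sum_le_sum_abs _ _
      _ ≤ ∑ k ∈ Finset.range (N + 1), D * (N : ℝ) ^ α * ((N.choose k : ℝ) * a ^ k) := by
        apply Finset.sum_le_sum
        intro k hk
        rw [abs_mul, abs_pow, abs_of_pos ha]
        calc |c α N k| * a ^ k ≤ (D * (N : ℝ) ^ α * (N.choose k : ℝ)) * a ^ k := by
              apply mul_le_mul_of_nonneg_right (hcoef N hN k (by
                have := Finset.mem_range.mp hk; omega)) (by positivity)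
          _ = D * (N : ℝ) ^ α * ((N.choose k : ℝ) * a ^ k) := by ring
      _ = D * (N : ℝ) ^ α * (1 + a) ^ N := by
        rw [← Finset.mul_sum, sum_choose_pow]
  · have hpow : (1 + a) ^ (N - 1) ≤ (1 + a) ^ N :=
      pow_le_pow_right₀ (by linarith) (by omega)
    calc |P1 α N a| ≤ ∑ k ∈ Finset.range (N + 1), |c α N k * ((k : ℝ) * a ^ (k - 1))| :=
        Finset.abs_sum_le_sum_abs _ _
      _ ≤ ∑ k ∈ Finset.range (N + 1), D * (N : ℝ) ^ α * ((N.choose k : ℝ) * ((k : ℝ) * a ^ (k - 1))) := by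
        apply Finset.sum_le_sum
        intro k hk
        rw [abs_mul, abs_mul, abs_pow, abs_of_pos ha, Nat.abs_cast]
        calc |c α N k| * ((k : ℝ) * a ^ (k - 1)) ≤
            (D * (N : ℝ) ^ α * (N.choose k : ℝ)) * ((k : ℝ) * a ^ (k - 1)) := by
              apply mul_le_mul_of_nonneg_right (hcoef N hN k (by
                have := Finset.mem_range.mp hk; omega)) (by positivity)
          _ = D * (N : ℝ) ^ α * ((N.choose k : ℝ) * ((k : ℝ) * a ^ (k - 1))) := by ring
      _ = D * (N : ℝ) ^ α * ((N : ℝ) * (1 + a) ^ (N - 1)) := by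
        rw [← Finset.mul_sum, sum_choose_deriv]
      _ ≤ D * (N : ℝ) ^ α * (N : ℝ) * (1 + a) ^ N := by
        have hNα : (0:ℝ) ≤ (N:ℝ) ^ α := Real.rpow_nonneg (by positivity) α
        calc D * (N : ℝ) ^ α * ((N : ℝ) * (1 + a) ^ (N - 1)) ≤
            D * (N : ℝ) ^ α * ((N : ℝ) * (1 + a) ^ N) := by
              apply mul_le_mul_of_nonneg_left
                (mul_le_mul_of_nonneg_left hpow (by positivity)) (by positivity)
          _ = D * (N : ℝ) ^ α * (N : ℝ) * (1 + a) ^ N := by ring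


-- Window hypotheses: |α+1|*2 ≤ N, 2 ≤ N, 8*(1+|g α|) ≤ N*x, x ≤ N/2, 0 < x
section Window
variable {α : ℝ} {N : ℕ} {x : ℝ}

lemma qq_repr (hx : x ≠ 0) : qq α N x = (bb α N * x - x^2/4 + g α) / x^2 := by
  unfold qq; field_simp; ring

lemma qd_repr (hx : x ≠ 0) : qd α N x = -((bb α N * x + 2 * g α) / x^3) := by
  unfold qd; field_simp; ring

lemma qdd_repr (hx : x ≠ 0) : qdd α N x = (2 * bb α N * x + 6 * g α) / x^4 := by
  unfold qdd; field_simp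

structure Win (α : ℝ) (N : ℕ) (x : ℝ) : Prop where
  hα2 : |α + 1| * 2 ≤ (N:ℝ)
  hN2 : 2 ≤ (N:ℝ)
  hM : 8 * (1 + |g α|) ≤ (N:ℝ) * x
  hxN : x ≤ (N:ℝ) / 2
  hx : 0 < x

namespace Win

lemma hxne (W : Win α N x) : x ≠ 0 := W.hx.ne'

lemma habs (W : Win α N x) : |g α| * 8 ≤ (N:ℝ) * x := by nlinarith [W.hM, abs_nonneg (g α)]

lemma hbbx_low (W : Win α N x) : 3/4 * ((N:ℝ) * x) ≤ bb α N * x := by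
  have h1 : -((N:ℝ)/2) ≤ α + 1 := by
    have := neg_abs_le (α + 1); nlinarith [W.hα2]
  have := mul_le_mul_of_nonneg_right h1 W.hx.le
  unfold bb; nlinarith [W.hx.le]

lemma hbbx_up (W : Win α N x) : bb α N * x ≤ 5/4 * ((N:ℝ) * x) := by
  have h1 : α + 1 ≤ (N:ℝ)/2 := by
    have := le_abs_self (α + 1); nlinarith [W.hα2]
  have := mul_le_mul_of_nonneg_right h1 W.hx.le
  unfold bb; nlinarith [W.hx.le]

lemma hx2 (W : Win α N x) : x^2 ≤ (N:ℝ) * x / 2 := by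
  have := mul_le_mul_of_nonneg_right W.hxN W.hx.le
  nlinarith

lemma hg_low (W : Win α N x) : -((N:ℝ) * x / 8) ≤ g α := by
  have := neg_abs_le (g α); nlinarith [W.habs]

lemma hg_up (W : Win α N x) : g α ≤ (N:ℝ) * x / 8 := by
  have := le_abs_self (g α); nlinarith [W.habs]

lemma qq_lower (W : Win α N x) : (N:ℝ) / (4 * x) ≤ qq α N x := by
  have hx0 : x ≠ 0 := W.hx.ne'
  have hxp := W.hx
  rw [qq_repr hx0]
  have e2 : (N:ℝ) / (4 * x) = ((N:ℝ) * x / 4) / x^2 := by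
    field_simp
  rw [e2]
  apply div_le_div_of_nonneg_right ?_ (by positivity)
  linarith [W.hbbx_low, W.hx2, W.hg_low, W.hM, abs_nonneg (g α)]

lemma qq_upper (W : Win α N x) : qq α N x ≤ 2 * N / x := by
  have hx0 : x ≠ 0 := W.hx.ne'
  have hxp := W.hx
  rw [qq_repr hx0]
  have e2 : 2 * (N:ℝ) / x = (2 * ((N:ℝ) * x)) / x^2 := by
    field_simp
  rw [e2]
  apply div_le_div_of_nonneg_right ?_ (by positivity)
  linarith [W.hbbx_up, W.hg_up, sq_nonneg x, W.hM, abs_nonneg (g α)]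

lemma qq_pos (W : Win α N x) : 0 < qq α N x := by
  refine lt_of_lt_of_le ?_ W.qq_lower
  have h1 := W.hx
  have h2 := W.hN2
  positivity

lemma qd_abs (W : Win α N x) : |qd α N x| ≤ 2 * N / x^2 := by
  have hx0 : x ≠ 0 := W.hx.ne'
  have hxp := W.hx
  rw [qd_repr hx0, abs_neg, abs_div]
  have e2 : 2 * (N:ℝ) / x^2 = (2 * ((N:ℝ) * x)) / x^3 := by
    field_simp
  rw [e2, abs_of_pos (by positivity : (0:ℝ) < x^3)]
  apply div_le_div_of_nonneg_right ?_ (by positivity)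
  rw [abs_le]
  constructor
  · nlinarith [W.hbbx_low, W.hbbx_up, W.hg_low, W.hg_up]
  · nlinarith [W.hbbx_low, W.hbbx_up, W.hg_low, W.hg_up]

lemma qdd_abs (W : Win α N x) : |qdd α N x| ≤ 4 * N / x^3 := by
  have hx0 : x ≠ 0 := W.hx.ne'
  have hxp := W.hx
  rw [qdd_repr hx0, abs_div]
  have e2 : 4 * (N:ℝ) / x^3 = (4 * ((N:ℝ) * x)) / x^4 := by
    field_simp
  rw [e2, abs_of_pos (by positivity : (0:ℝ) < x^4)]
  apply div_le_div_of_nonneg_right ?_ (by positivity)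
  rw [abs_le]
  constructor
  · nlinarith [W.hbbx_low, W.hbbx_up, W.hg_low, W.hg_up]
  · nlinarith [W.hbbx_low, W.hbbx_up, W.hg_low, W.hg_up]

set_option maxHeartbeats 1000000 in
lemma big_bound (W : Win α N x) :
    |4 * qq α N x * qdd α N x - 5 * qd α N x ^ 2| ≤ 52 * N^2 / x^4 := by
  have hx0 : x ≠ 0 := W.hx.ne'
  have hxp := W.hx
  set X := bb α N * x with hX
  set G := g α with hG
  set S := (N:ℝ) * x with hS
  have hS0 : 0 ≤ S := le_trans (by positivity) W.hM
  have hXlo : 3/4 * S ≤ X := W.hbbx_low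
  have hXup : X ≤ 5/4 * S := W.hbbx_up
  have hX0 : 0 ≤ X := le_trans (by linarith) hXlo
  have hGlo : -(S/8) ≤ G := by have := W.hg_low; linarith
  have hGup : G ≤ S/8 := by have := W.hg_up; linarith
  have hx2 : x^2 ≤ S/2 := by have := W.hx2; linarith
  have hrepr : 4 * qq α N x * qdd α N x - 5 * qd α N x ^ 2 =
      (3*X^2 + 12*X*G - 2*X*x^2 - 6*G*x^2 + 4*G^2) / x^6 := by
    rw [qq_repr hx0, qd_repr hx0, qdd_repr hx0, hX, hG]
    field_simp
    ring
  rw [hrepr, abs_div, abs_of_pos (by positivity : (0:ℝ) < x^6)]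
  have key : |3*X^2 + 12*X*G - 2*X*x^2 - 6*G*x^2 + 4*G^2| ≤ 52 * S^2 := by
    have hXX : X^2 ≤ 25/16 * S^2 := by nlinarith
    have hGG : G^2 ≤ 1/64 * S^2 := by nlinarith
    have hXG1 : X*G ≤ 5/4*S * (S/8) := by nlinarith
    have hXG2 : -(5/4*S * (S/8)) ≤ X*G := by nlinarith
    have hXx1 : 0 ≤ X*x^2 := mul_nonneg hX0 (sq_nonneg x)
    have hXx2 : X*x^2 ≤ 5/4*S * (S/2) := by nlinarith [sq_nonneg x]
    have hGx1 : -(S/8 * (S/2)) ≤ G*x^2 := by nlinarith [sq_nonneg x]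
    have hGx2 : G*x^2 ≤ S/8 * (S/2) := by nlinarith [sq_nonneg x]
    rw [abs_le]
    constructor <;> nlinarith [sq_nonneg S]
  calc |3*X^2 + 12*X*G - 2*X*x^2 - 6*G*x^2 + 4*G^2| / x^6 ≤ (52 * S^2) / x^6 :=
        div_le_div_of_nonneg_right key (by positivity)
    _ = 52 * N^2 / x^4 := by rw [hS]; field_simp


lemma B_nonneg (W : Win α N x) : 0 ≤ B α N x := by
  have hq := W.qq_pos
  unfold B
  positivity

lemma Q_nonneg (W : Win α N x) : 0 ≤ Q α N x := by
  have hq := W.qq_pos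
  unfold Q
  positivity

lemma B_sq (W : Win α N x) : B α N x ^ 2 = qq α N x * Q α N x := by
  have hq := W.qq_pos
  unfold Q
  field_simp

set_option maxHeartbeats 1000000 in
lemma q25 (W : Win α N x) :
    (N:ℝ)^2 * Real.sqrt N / (32 * x^2 * Real.sqrt x) ≤
      qq α N x ^ 2 * Real.sqrt (qq α N x) := by
  have hxp := W.hx
  have hq := W.qq_pos
  have hN0 : (0:ℝ) < N := by have := W.hN2; linarith
  have h1 : Real.sqrt ((N:ℝ)/(4*x)) ≤ Real.sqrt (qq α N x) := Real.sqrt_le_sqrt W.qq_lower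
  have h2 : Real.sqrt ((N:ℝ)/(4*x)) = Real.sqrt N / (2 * Real.sqrt x) := by
    rw [Real.sqrt_div hN0.le, show (4:ℝ)*x = 2^2 * x by norm_num, Real.sqrt_mul (by positivity),
      Real.sqrt_sq (by norm_num : (0:ℝ) ≤ 2)]
  have h3 : ((N:ℝ)/(4*x))^2 ≤ qq α N x ^ 2 := by
    apply pow_le_pow_left₀ (by positivity) W.qq_lower
  have h4 : ((N:ℝ)/(4*x))^2 * (Real.sqrt N / (2 * Real.sqrt x)) ≤
      qq α N x ^ 2 * Real.sqrt (qq α N x) := by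
    apply mul_le_mul h3 (by rw [← h2]; exact h1) (by positivity) (by positivity)
  refine le_trans (le_of_eq ?_) h4
  have hsx : Real.sqrt x > 0 := Real.sqrt_pos.mpr hxp
  field_simp
  ring

set_option maxHeartbeats 1000000 in
lemma rate (W : Win α N x) :
    |Qd α N x| ≤ 208 / (Real.sqrt N * (x * Real.sqrt x)) * Q α N x := by
  have hxp := W.hx
  have hq := W.qq_pos
  have hN0 : (0:ℝ) < N := by have := W.hN2; linarith
  have hsx : (0:ℝ) < Real.sqrt x := Real.sqrt_pos.mpr hxp
  have hsN : (0:ℝ) < Real.sqrt N := Real.sqrt_pos.mpr hN0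
  have hsq : (0:ℝ) < Real.sqrt (qq α N x) := Real.sqrt_pos.mpr hq
  have hB0 := W.B_nonneg
  have hQ0 := W.Q_nonneg
  -- |Qd| = |R| * (|u| * |A|) * B
  have habs : |Qd α N x| = |(4 * qq α N x * qdd α N x - 5 * qd α N x ^ 2) / (4 * qq α N x ^ 3)|
      * (|u α N x| * |A α N x|) * B α N x := by
    unfold Qd
    rw [abs_mul, abs_mul, abs_mul, abs_of_nonneg hB0]
    ring
  have hR : |(4 * qq α N x * qdd α N x - 5 * qd α N x ^ 2) / (4 * qq α N x ^ 3)| ≤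
      (52 * N^2 / x^4) / (4 * qq α N x ^ 3) := by
    rw [abs_div, abs_of_pos (by positivity : (0:ℝ) < 4 * qq α N x ^ 3)]
    exact div_le_div_of_nonneg_right (W.big_bound) (by positivity)
  have hAM : |u α N x| * |A α N x| ≤ B α N x / (2 * Real.sqrt (qq α N x)) := by
    rw [le_div_iff₀ (by positivity)]
    have hexp : Real.sqrt (qq α N x) ^ 2 = qq α N x := Real.sq_sqrt hq.le
    have h1 := sq_nonneg (Real.sqrt (qq α N x) * |u α N x| - |A α N x|)
    have h2 : |u α N x| ^ 2 = u α N x ^ 2 := sq_abs _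
    have h3 : |A α N x| ^ 2 = A α N x ^ 2 := sq_abs _
    unfold B
    nlinarith [abs_nonneg (u α N x), abs_nonneg (A α N x)]
  have step1 : |Qd α N x| ≤ (52 * N^2 / x^4) / (4 * qq α N x ^ 3)
      * (B α N x / (2 * Real.sqrt (qq α N x))) * B α N x := by
    rw [habs]
    apply mul_le_mul_of_nonneg_right ?_ hB0
    apply mul_le_mul hR hAM (by positivity) (by positivity)
  have step2 : (52 * N^2 / x^4) / (4 * qq α N x ^ 3)
      * (B α N x / (2 * Real.sqrt (qq α N x))) * B α N x
      = 52 * N^2 / (8 * x^4) * (Q α N x / (qq α N x ^ 2 * Real.sqrt (qq α N x))) := by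
    have hB2 := W.B_sq
    field_simp
    linear_combination 8 * hB2
  have step3 : Q α N x / (qq α N x ^ 2 * Real.sqrt (qq α N x)) ≤
      Q α N x * (32 * x^2 * Real.sqrt x) / ((N:ℝ)^2 * Real.sqrt N) := by
    rw [div_le_div_iff₀ (by positivity) (by positivity)]
    have h5 : Q α N x * ((N:ℝ)^2 * Real.sqrt N / (32 * x^2 * Real.sqrt x)) ≤
        Q α N x * (qq α N x ^ 2 * Real.sqrt (qq α N x)) :=
      mul_le_mul_of_nonneg_left (W.q25) hQ0
    have h6 := mul_le_mul_of_nonneg_right h5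
      (show (0:ℝ) ≤ 32 * x^2 * Real.sqrt x by positivity)
    calc Q α N x * ((N:ℝ)^2 * Real.sqrt N)
        = Q α N x * ((N:ℝ)^2 * Real.sqrt N / (32 * x^2 * Real.sqrt x)) * (32 * x^2 * Real.sqrt x) := by
          field_simp
      _ ≤ Q α N x * (qq α N x ^ 2 * Real.sqrt (qq α N x)) * (32 * x^2 * Real.sqrt x) := h6
      _ = Q α N x * (32 * x^2 * Real.sqrt x) * (qq α N x ^ 2 * Real.sqrt (qq α N x)) := by ring
  calc |Qd α N x| ≤ 52 * N^2 / (8 * x^4) * (Q α N x / (qq α N x ^ 2 * Real.sqrt (qq α N x))) := by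
        rw [← step2]; exact step1
    _ ≤ 52 * N^2 / (8 * x^4) * (Q α N x * (32 * x^2 * Real.sqrt x) / ((N:ℝ)^2 * Real.sqrt N)) := by
        apply mul_le_mul_of_nonneg_left step3 (by positivity)
    _ = 208 / (Real.sqrt N * (x * Real.sqrt x)) * Q α N x := by
        have hxx : Real.sqrt x * Real.sqrt x = x := Real.mul_self_sqrt hxp.le
        field_simp
        linear_combination (1664 * Q α N x) * hxx

end Win

set_option maxHeartbeats 1000000 in
lemma gronwall (α : ℝ) (N : ℕ) (a b : ℝ) (hab : a ≤ b)
    (hwin : ∀ y, y ∈ Set.Icc a b → Win α N y) :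
    Q α N b ≤ Q α N a * Real.exp (416 / (Real.sqrt N * Real.sqrt a)) := by
  have Wa := hwin a (Set.left_mem_Icc.mpr hab)
  have Wb := hwin b (Set.right_mem_Icc.mpr hab)
  have hN0 : (0:ℝ) < N := by have := Wa.hN2; linarith
  have hsN : (0:ℝ) < Real.sqrt N := Real.sqrt_pos.mpr hN0
  set Φ : ℝ → ℝ := fun y => Q α N y * Real.exp (416 / Real.sqrt (N:ℝ) * (Real.sqrt y)⁻¹) with hΦdef
  have hΦderiv : ∀ y, y ∈ Set.Icc a b →
      HasDerivAt Φ (Qd α N y * Real.exp (416 / Real.sqrt (N:ℝ) * (Real.sqrt y)⁻¹)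
        + Q α N y * (Real.exp (416 / Real.sqrt (N:ℝ) * (Real.sqrt y)⁻¹)
          * (416 / Real.sqrt (N:ℝ) * (-(1 / (2 * Real.sqrt y)) / Real.sqrt y ^ 2)))) y := by
    intro y hy
    have W := hwin y hy
    have hy0 : 0 < y := W.hx
    have hsy : (0:ℝ) < Real.sqrt y := Real.sqrt_pos.mpr hy0
    have hQ' := hasDerivAt_Q α N y hy0 W.qq_pos.ne'
    have hs : HasDerivAt (fun z : ℝ => 416 / Real.sqrt (N:ℝ) * (Real.sqrt z)⁻¹)
        (416 / Real.sqrt (N:ℝ) * (-(1 / (2 * Real.sqrt y)) / Real.sqrt y ^ 2)) y :=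
      ((Real.hasDerivAt_sqrt hy0.ne').inv hsy.ne').const_mul _
    exact hQ'.mul hs.exp
  have hd0 : ∀ y, y ∈ Set.Icc a b →
      Qd α N y * Real.exp (416 / Real.sqrt (N:ℝ) * (Real.sqrt y)⁻¹)
        + Q α N y * (Real.exp (416 / Real.sqrt (N:ℝ) * (Real.sqrt y)⁻¹)
          * (416 / Real.sqrt (N:ℝ) * (-(1 / (2 * Real.sqrt y)) / Real.sqrt y ^ 2))) ≤ 0 := by
    intro y hy
    have W := hwin y hy
    have hy0 : 0 < y := W.hx
    have hsy : (0:ℝ) < Real.sqrt y := Real.sqrt_pos.mpr hy0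
    have h1 : Qd α N y ≤ 208 / (Real.sqrt N * (y * Real.sqrt y)) * Q α N y :=
      le_trans (le_abs_self _) W.rate
    have hsq : Real.sqrt y ^ 2 = y := Real.sq_sqrt hy0.le
    have heq : 416 / Real.sqrt (N:ℝ) * (-(1 / (2 * Real.sqrt y)) / Real.sqrt y ^ 2) =
        -(208 / (Real.sqrt N * (y * Real.sqrt y))) := by
      rw [hsq]
      field_simp
      ring
    rw [heq]
    have hexp : (0:ℝ) < Real.exp (416 / Real.sqrt (N:ℝ) * (Real.sqrt y)⁻¹) := Real.exp_pos _
    have hkey : Qd α N y - 208 / (Real.sqrt N * (y * Real.sqrt y)) * Q α N y ≤ 0 := by linarith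
    calc Qd α N y * Real.exp (416 / Real.sqrt (N:ℝ) * (Real.sqrt y)⁻¹)
        + Q α N y * (Real.exp (416 / Real.sqrt (N:ℝ) * (Real.sqrt y)⁻¹)
          * (-(208 / (Real.sqrt N * (y * Real.sqrt y)))))
        = Real.exp (416 / Real.sqrt (N:ℝ) * (Real.sqrt y)⁻¹)
          * (Qd α N y - 208 / (Real.sqrt N * (y * Real.sqrt y)) * Q α N y) := by ring
      _ ≤ 0 := mul_nonpos_of_nonneg_of_nonpos hexp.le hkey
  have hmono : AntitoneOn Φ (Set.Icc a b) := by
    apply antitoneOn_of_deriv_nonpos (convex_Icc a b)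
    · intro y hy
      exact (hΦderiv y hy).continuousAt.continuousWithinAt
    · intro y hy
      rw [interior_Icc] at hy
      exact ((hΦderiv y (Set.mem_Icc_of_Ioo hy)).differentiableAt).differentiableWithinAt
    · intro y hy
      rw [interior_Icc] at hy
      rw [(hΦderiv y (Set.mem_Icc_of_Ioo hy)).deriv]
      exact hd0 y (Set.mem_Icc_of_Ioo hy)
  have hΦab : Φ b ≤ Φ a := hmono (Set.left_mem_Icc.mpr hab) (Set.right_mem_Icc.mpr hab) hab
  have hsa : (0:ℝ) < Real.sqrt a := Real.sqrt_pos.mpr Wa.hx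
  have hsb : (0:ℝ) < Real.sqrt b := Real.sqrt_pos.mpr Wb.hx
  have h2 : Q α N b ≤ Φ b := by
    rw [hΦdef]
    have : (1:ℝ) ≤ Real.exp (416 / Real.sqrt (N:ℝ) * (Real.sqrt b)⁻¹) := by
      rw [Real.one_le_exp_iff]
      positivity
    nlinarith [Wb.Q_nonneg]
  have h3 : Φ a = Q α N a * Real.exp (416 / (Real.sqrt N * Real.sqrt a)) := by
    simp only [hΦdef]
    rw [← div_eq_mul_inv, div_div]
  rw [← h3]
  exact le_trans h2 hΦab

end Window

section Endpoint
open Real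

set_option maxHeartbeats 1000000 in
lemma endpoint (α : ℝ) (N : ℕ) (a M E1 : ℝ) (W : Win α N a) (hE1 : 0 < E1)
    (hM : 1 ≤ M) (ha : a * N = M)
    (hP : |P α N a| ≤ E1 * (N:ℝ) ^ (α:ℝ))
    (hP1 : |P1 α N a| ≤ E1 * (N:ℝ) ^ (α:ℝ) * N) :
    Q α N a ≤ 4 * M * (2 * (M ^ ((α+1)/2:ℝ) * E1)^2 +
        (M ^ ((α+1)/2:ℝ) * E1 * (4 + |α+1|))^2)^2 * (N:ℝ) ^ (2*α:ℝ) := by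
  have hNp : (0:ℝ) < N := by have := W.hN2; linarith
  have hap0 : 0 < a := W.hx
  have haeq : a = M / N := by field_simp at ha ⊢; linarith [ha]
  set T : ℝ := (N:ℝ) ^ ((α+1)/2 : ℝ) with hT
  have hT0 : 0 < T := Real.rpow_pos_of_pos hNp _
  have hM0 : (0:ℝ) < M := by linarith
  have hMp0 : (0:ℝ) < M ^ ((α+1)/2:ℝ) := Real.rpow_pos_of_pos hM0 _
  have hT2 : T ^ 2 = (N:ℝ) ^ (α:ℝ) * N := by
    rw [hT, ← Real.rpow_natCast ((N:ℝ) ^ ((α+1)/2:ℝ)) 2, ← Real.rpow_mul hNp.le]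
    rw [show ((α+1)/2) * ((2:ℕ):ℝ) = α + 1 by push_cast; ring]
    rw [Real.rpow_add hNp, Real.rpow_one]
  have hT4 : T ^ 4 = (N:ℝ) ^ (2*α:ℝ) * N^2 := by
    rw [hT, ← Real.rpow_natCast ((N:ℝ) ^ ((α+1)/2:ℝ)) 4, ← Real.rpow_mul hNp.le]
    rw [show ((α+1)/2) * ((4:ℕ):ℝ) = 2*α + ((2:ℕ):ℝ) by push_cast; ring]
    rw [Real.rpow_add hNp, Real.rpow_natCast]
  have hap : a ^ ((α+1)/2 : ℝ) = M ^ ((α+1)/2 : ℝ) / T := by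
    rw [haeq, Real.div_rpow hM0.le hNp.le, hT]
  set c1 : ℝ := M ^ ((α+1)/2:ℝ) * E1 with hc1
  have hc10 : 0 < c1 := by positivity
  -- bound on |u a|
  have hexp1 : Real.exp (-a/2) ≤ 1 := by
    rw [Real.exp_le_one_iff]; linarith
  have hexp0 : (0:ℝ) < Real.exp (-a/2) := Real.exp_pos _
  have hu : |u α N a| ≤ c1 * T / N := by
    have : |u α N a| = a ^ ((α+1)/2 : ℝ) * Real.exp (-a/2) * |P α N a| := by
      unfold u
      rw [abs_mul, abs_mul, abs_of_pos (Real.rpow_pos_of_pos hap0 _), abs_of_pos hexp0]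
    rw [this, hap]
    calc M ^ ((α+1)/2 : ℝ) / T * Real.exp (-a/2) * |P α N a|
        ≤ M ^ ((α+1)/2 : ℝ) / T * 1 * (E1 * (N:ℝ) ^ (α:ℝ)) := by
          apply mul_le_mul (mul_le_mul_of_nonneg_left hexp1 (by positivity)) hP
            (abs_nonneg _) (by positivity)
      _ = c1 * T / N := by
          have : (N:ℝ) ^ (α:ℝ) = T^2 / N := by
            rw [hT2]; field_simp
          rw [this, hc1]
          field_simp
  -- bound on |u1 a|
  have hainv : a⁻¹ = N / M := by rw [haeq]; field_simp
  have hu1 : |u1 α N a| ≤ c1 * (2 + |α+1|) * T := by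
    have heq : |u1 α N a| = a ^ ((α+1)/2 : ℝ) * Real.exp (-a/2) *
        |P1 α N a + ((α + 1) / 2 * a⁻¹ - 1 / 2) * P α N a| := by
      unfold u1
      rw [abs_mul, abs_mul, abs_of_pos (Real.rpow_pos_of_pos hap0 _), abs_of_pos hexp0]
    have hinner : |P1 α N a + ((α + 1) / 2 * a⁻¹ - 1 / 2) * P α N a| ≤
        E1 * (N:ℝ) ^ (α:ℝ) * N * (2 + |α+1|) := by
      have h1 : |((α + 1) / 2 * a⁻¹ - 1 / 2)| ≤ |α+1| / 2 * (N/M) + 1/2 := by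
        rw [hainv]
        calc |((α + 1) / 2 * (N/M) - 1 / 2)| ≤ |(α + 1) / 2 * (N/M)| + |(1:ℝ)/2| := by
              apply abs_sub _ _
          _ ≤ |α+1| / 2 * (N/M) + 1/2 := by
              rw [abs_mul, abs_div, abs_of_pos (by positivity : (0:ℝ) < (N:ℝ)/M),
                abs_of_pos (by norm_num : (0:ℝ) < (1:ℝ)/2)]
              norm_num
        -- done
      calc |P1 α N a + ((α + 1) / 2 * a⁻¹ - 1 / 2) * P α N a|
          ≤ |P1 α N a| + |((α + 1) / 2 * a⁻¹ - 1 / 2)| * |P α N a| := by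
            rw [← abs_mul]; apply abs_add_le
        _ ≤ E1 * (N:ℝ) ^ (α:ℝ) * N + (|α+1| / 2 * (N/M) + 1/2) * (E1 * (N:ℝ) ^ (α:ℝ)) := by
            apply add_le_add hP1
            apply mul_le_mul h1 hP (abs_nonneg _) (by positivity)
        _ ≤ E1 * (N:ℝ) ^ (α:ℝ) * N * (2 + |α+1|) := by
            have hNα : (0:ℝ) < (N:ℝ) ^ (α:ℝ) := Real.rpow_pos_of_pos hNp _
            have hN1 : (1:ℝ) ≤ N := by linarith [W.hN2]
            have hNM : (N:ℝ)/M ≤ N := by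
              rw [div_le_iff₀ hM0]; nlinarith
            have e1 : |α+1| / 2 * ((N:ℝ)/M) * (E1 * (N:ℝ)^(α:ℝ)) ≤
                |α+1| * (E1 * (N:ℝ)^(α:ℝ) * N) := by
              have := abs_nonneg (α+1)
              have h2 : |α+1| / 2 * ((N:ℝ)/M) ≤ |α+1| * N := by
                calc |α+1| / 2 * ((N:ℝ)/M) ≤ |α+1| / 2 * N := by
                      apply mul_le_mul_of_nonneg_left hNM (by positivity)
                  _ ≤ |α+1| * N := by nlinarith
              calc |α+1| / 2 * ((N:ℝ)/M) * (E1 * (N:ℝ)^(α:ℝ)) ≤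
                  (|α+1| * N) * (E1 * (N:ℝ)^(α:ℝ)) := by
                    apply mul_le_mul_of_nonneg_right h2 (by positivity)
                _ = |α+1| * (E1 * (N:ℝ)^(α:ℝ) * N) := by ring
            nlinarith [hNα, hE1, hN1, mul_pos hE1 hNα]
      -- end hinner
    rw [heq, hap]
    calc M ^ ((α+1)/2 : ℝ) / T * Real.exp (-a/2) *
        |P1 α N a + ((α + 1) / 2 * a⁻¹ - 1 / 2) * P α N a|
        ≤ M ^ ((α+1)/2 : ℝ) / T * 1 * (E1 * (N:ℝ) ^ (α:ℝ) * N * (2 + |α+1|)) := by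
          apply mul_le_mul (mul_le_mul_of_nonneg_left hexp1 (by positivity)) hinner
            (abs_nonneg _) (by positivity)
      _ = c1 * (2 + |α+1|) * T := by
          have hNe : (N:ℝ) ^ (α:ℝ) = T^2 / N := by rw [hT2]; field_simp
          rw [hNe, hc1]
          field_simp
  -- q bounds at a
  have hqlo : (N:ℝ)^2 / (4*M) ≤ qq α N a := by
    refine le_trans (le_of_eq ?_) W.qq_lower
    rw [haeq]
    field_simp
  have hqup : qq α N a ≤ 2 * (N:ℝ)^2 / M := by
    refine le_trans W.qq_upper (le_of_eq ?_)
    rw [haeq]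
    field_simp
  have hqd : |qd α N a| ≤ 2 * (N:ℝ)^3 / M^2 := by
    refine le_trans W.qd_abs (le_of_eq ?_)
    rw [haeq]
    field_simp
  have hq0 : 0 < qq α N a := W.qq_pos
  -- bound on |A a|
  have hA : |A α N a| ≤ (c1 * (2 + |α+1|) + 2 * c1) * T := by
    have h2 : |qd α N a * u α N a / (4 * qq α N a)| ≤ 2 * c1 * T := by
      rw [abs_div, abs_mul, abs_of_pos (by positivity : (0:ℝ) < 4 * qq α N a)]
      rw [div_le_iff₀ (by positivity)]
      calc |qd α N a| * |u α N a| ≤ (2 * (N:ℝ)^3 / M^2) * (c1 * T / N) := by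
            apply mul_le_mul hqd hu (abs_nonneg _) (by positivity)
        _ = (2 * c1 * T) * ((N:ℝ)^2 / M^2) := by field_simp
        _ ≤ (2 * c1 * T) * (4 * qq α N a) := by
            apply mul_le_mul_of_nonneg_left ?_ (by positivity)
            calc (N:ℝ)^2/M^2 ≤ (N:ℝ)^2/M := by
                  apply div_le_div_of_nonneg_left (by positivity) hM0
                  nlinarith
              _ ≤ 4 * qq α N a := by
                  calc (N:ℝ)^2/M ≤ 4 * ((N:ℝ)^2/(4*M)) := le_of_eq (by field_simp)
                    _ ≤ 4 * qq α N a := by linarith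
    calc |A α N a| ≤ |u1 α N a| + |qd α N a * u α N a / (4 * qq α N a)| := abs_add_le _ _
      _ ≤ c1 * (2 + |α+1|) * T + 2 * c1 * T := add_le_add hu1 h2
      _ = (c1 * (2 + |α+1|) + 2 * c1) * T := by ring
  -- bound on B a
  set c3 : ℝ := c1 * (2 + |α+1|) + 2 * c1 with hc3
  have hc30 : 0 < c3 := by positivity
  have hB : B α N a ≤ (2 * c1^2 + c3^2) * T^2 := by
    unfold B
    have h1 : qq α N a * u α N a ^ 2 ≤ (2 * (N:ℝ)^2 / M) * (c1 * T / N)^2 := by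
      apply mul_le_mul hqup ?_ (sq_nonneg _) (by positivity)
      rw [← sq_abs]
      apply pow_le_pow_left₀ (abs_nonneg _) hu
    have h2 : A α N a ^ 2 ≤ (c3 * T)^2 := by
      rw [← sq_abs]
      apply pow_le_pow_left₀ (abs_nonneg _) hA
    have h3 : (2 * (N:ℝ)^2 / M) * (c1 * T / N)^2 ≤ 2 * c1^2 * T^2 := by
      have : (2 * (N:ℝ)^2 / M) * (c1 * T / N)^2 = (2 * c1^2 * T^2) / M := by
        field_simp
      rw [this]
      apply div_le_self (by positivity) hM
    calc qq α N a * u α N a ^ 2 + A α N a ^ 2 ≤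
        (2 * (N:ℝ)^2 / M) * (c1 * T / N)^2 + (c3 * T)^2 := add_le_add h1 h2
      _ ≤ 2 * c1^2 * T^2 + c3^2 * T^2 := by nlinarith [h3]
      _ = (2 * c1^2 + c3^2) * T^2 := by ring
  -- conclude
  have hB0 := W.B_nonneg
  have hQ : Q α N a ≤ ((2 * c1^2 + c3^2) * T^2)^2 / ((N:ℝ)^2/(4*M)) := by
    unfold Q
    apply div_le_div₀ (by positivity) ?_ (by positivity) hqlo
    rw [← sq_abs, abs_of_nonneg hB0]
    apply pow_le_pow_left₀ hB0 hB
  refine le_trans hQ ?_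
  have : ((2 * c1^2 + c3^2) * T^2)^2 / ((N:ℝ)^2/(4*M)) =
      4 * M * (2 * c1^2 + c3^2)^2 * (T^4 / N^2) := by
    field_simp
  rw [this]
  have hT4' : T^4 / (N:ℝ)^2 = (N:ℝ) ^ (2*α:ℝ) := by
    rw [hT4]; field_simp
  rw [hT4']
  apply le_of_eq
  rw [hc3, hc1]
  ring

end Endpoint




end HardEdge

open HardEdge in
set_option maxHeartbeats 2000000 in
/-- Uniform hard-edge bound for Laguerre polynomials on `M₀/N ≤ x ≤ δN`. -/
theorem laguerre_poly_hard_edge_bound (α : ℝ) (hα : -2 < α) :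
    ∃ δ : ℝ, 0 < δ ∧ δ < 1 ∧ ∃ M₀ : ℝ, 0 < M₀ ∧ ∃ N₀ : ℕ, 1 ≤ N₀ ∧ ∃ C : ℝ, 0 < C ∧
      ∀ N : ℕ, N₀ ≤ N → ∀ x : ℝ, M₀ / N ≤ x → x ≤ δ * N →
        |x ^ (α / 2) * Real.exp (-x / 2) * laguerreL N α x| ≤
          C * (N : ℝ) ^ (α / 2) * ((N : ℝ) * x) ^ (-(1 / 4) : ℝ) := by
  obtain ⟨D, hD, hPend⟩ := P_endpoint α hα
  set M₀ : ℝ := 8 * (1 + |g α|) with hM₀def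
  have hM₀1 : (1:ℝ) ≤ M₀ := by
    have := abs_nonneg (g α); rw [hM₀def]; linarith
  have hM₀0 : (0:ℝ) < M₀ := by linarith
  set E1 : ℝ := D * Real.exp M₀ with hE1def
  have hE1 : 0 < E1 := by positivity
  set CE : ℝ := 4 * M₀ * (2 * (M₀ ^ ((α+1)/2:ℝ) * E1)^2 +
      (M₀ ^ ((α+1)/2:ℝ) * E1 * (4 + |α+1|))^2)^2 with hCEdef
  have hCE : 0 < CE := by
    have h1 : (0:ℝ) < M₀ ^ ((α+1)/2:ℝ) := Real.rpow_pos_of_pos hM₀0 _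
    have h2 := abs_nonneg (α+1)
    positivity
  set E7 : ℝ := CE * Real.exp 416 with hE7def
  have hE7 : 0 < E7 := by positivity
  set C : ℝ := (4*E7) ^ ((1/4 : ℝ)) + 1 with hCdef
  have hC0 : 0 < C := by positivity
  have hC4 : 4 * E7 ≤ C ^ 4 := by
    have h1 : ((4*E7) ^ ((1/4:ℝ)))^4 ≤ C^4 := by
      apply pow_le_pow_left₀ (Real.rpow_nonneg (by positivity) _)
      rw [hCdef]; linarith
    calc 4*E7 = ((4*E7) ^ ((1/4:ℝ)))^4 := by
          rw [← Real.rpow_natCast ((4*E7) ^ ((1/4:ℝ))) 4, ← Real.rpow_mul (by positivity)]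
          norm_num
      _ ≤ C^4 := h1
  refine ⟨1/2, by norm_num, by norm_num, M₀, hM₀0, 2 + Nat.ceil (2*|α+1|), by omega, C, hC0, ?_⟩
  intro N hN x hax hxN
  -- basic facts about N
  have hNn2 : 2 ≤ N := by omega
  have hN2 : (2:ℝ) ≤ (N:ℝ) := by exact_mod_cast hNn2
  have hNp : (0:ℝ) < N := by linarith
  have hNα1 : |α+1| * 2 ≤ (N:ℝ) := by
    have h1 : (Nat.ceil (2*|α+1|) : ℝ) ≥ 2*|α+1| := Nat.le_ceil _
    have h2 : ((2 + Nat.ceil (2*|α+1|) : ℕ) : ℝ) ≤ (N:ℝ) := by exact_mod_cast hN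
    push_cast at h2
    linarith
  set a : ℝ := M₀ / N with hadef
  have ha0 : 0 < a := by positivity
  have haN : a * N = M₀ := by rw [hadef]; field_simp
  have hax' : a ≤ x := hax
  have hx0 : 0 < x := lt_of_lt_of_le ha0 hax'
  have hxN2 : x ≤ (N:ℝ)/2 := by linarith [hxN]
  -- the window
  have hwin : ∀ y, y ∈ Set.Icc a x → Win α N y := by
    intro y hy
    obtain ⟨h1, h2⟩ := hy
    have hy0 : 0 < y := lt_of_lt_of_le ha0 h1
    refine ⟨hNα1, hN2, ?_, by linarith, hy0⟩
    calc 8 * (1 + |g α|) = M₀ := hM₀def.symm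
      _ = (N:ℝ) * a := by rw [← haN]; ring
      _ ≤ (N:ℝ) * y := by apply mul_le_mul_of_nonneg_left h1 (by positivity)
  have Wa : Win α N a := hwin a (Set.left_mem_Icc.mpr hax')
  have Wx : Win α N x := hwin x (Set.right_mem_Icc.mpr hax')
  -- endpoint data
  have hbinom : (1 + a)^N ≤ Real.exp M₀ := by
    calc (1 + a)^N ≤ (Real.exp a)^N := by
          apply pow_le_pow_left₀ (by linarith) ?_
          linarith [Real.add_one_le_exp a]
      _ = Real.exp ((N:ℕ) * a) := by rw [← Real.exp_nat_mul]
      _ = Real.exp M₀ := by rw [← haN]; ring_nf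
  obtain ⟨hPa', hP1a'⟩ := hPend N hNn2 a ha0
  have hNαpos : (0:ℝ) < (N:ℝ) ^ (α:ℝ) := Real.rpow_pos_of_pos hNp _
  have hPa : |P α N a| ≤ E1 * (N:ℝ) ^ (α:ℝ) := by
    calc |P α N a| ≤ D * (N:ℝ)^(α:ℝ) * (1+a)^N := hPa'
      _ ≤ D * (N:ℝ)^(α:ℝ) * Real.exp M₀ := by
          apply mul_le_mul_of_nonneg_left hbinom (by positivity)
      _ = E1 * (N:ℝ)^(α:ℝ) := by rw [hE1def]; ring
  have hP1a : |P1 α N a| ≤ E1 * (N:ℝ) ^ (α:ℝ) * N := by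
    calc |P1 α N a| ≤ D * (N:ℝ)^(α:ℝ) * N * (1+a)^N := hP1a'
      _ ≤ D * (N:ℝ)^(α:ℝ) * N * Real.exp M₀ := by
          apply mul_le_mul_of_nonneg_left hbinom (by positivity)
      _ = E1 * (N:ℝ)^(α:ℝ) * N := by rw [hE1def]; ring
  have hend : Q α N a ≤ CE * (N:ℝ) ^ (2*α:ℝ) := by
    rw [hCEdef]
    exact endpoint α N a M₀ E1 Wa hE1 hM₀1 haN hPa hP1a
  -- Gronwall
  have hgron := gronwall α N a x hax' hwin
  have hsqa : Real.sqrt (N:ℝ) * Real.sqrt a = Real.sqrt M₀ := by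
    rw [← Real.sqrt_mul hNp.le, ← haN]; ring_nf
  have hsqM : (1:ℝ) ≤ Real.sqrt M₀ := by
    rw [show (1:ℝ) = Real.sqrt 1 from (Real.sqrt_one).symm]
    exact Real.sqrt_le_sqrt hM₀1
  have hexp416 : Real.exp (416 / (Real.sqrt (N:ℝ) * Real.sqrt a)) ≤ Real.exp 416 := by
    apply Real.exp_le_exp.mpr
    rw [hsqa]
    apply div_le_self (by norm_num) hsqM
  have hQx : Q α N x ≤ E7 * (N:ℝ) ^ (2*α:ℝ) := by
    have hQa0 := Wa.Q_nonneg
    calc Q α N x ≤ Q α N a * Real.exp (416 / (Real.sqrt (N:ℝ) * Real.sqrt a)) := hgron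
      _ ≤ (CE * (N:ℝ) ^ (2*α:ℝ)) * Real.exp 416 := by
          apply mul_le_mul hend hexp416 (Real.exp_pos _).le (by positivity)
      _ = E7 * (N:ℝ) ^ (2*α:ℝ) := by rw [hE7def]; ring
  -- from Q to u
  have hqx := Wx.qq_pos
  have hu4 : u α N x ^ 4 * ((N:ℝ)/(4*x)) ≤ E7 * (N:ℝ) ^ (2*α:ℝ) := by
    have h1 : qq α N x * u α N x ^ 2 ≤ B α N x := by
      unfold B; nlinarith [sq_nonneg (A α N x)]
    have h2 : qq α N x * u α N x ^ 4 ≤ Q α N x := by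
      have hB0 := Wx.B_nonneg
      have h3 : (qq α N x * u α N x ^ 2)^2 ≤ B α N x ^ 2 := by
        apply pow_le_pow_left₀ (by positivity) h1
      have h4 := Wx.B_sq
      nlinarith [hqx, sq_nonneg (u α N x)]
    calc u α N x ^ 4 * ((N:ℝ)/(4*x)) ≤ u α N x ^ 4 * qq α N x := by
          apply mul_le_mul_of_nonneg_left Wx.qq_lower (by positivity)
      _ = qq α N x * u α N x ^ 4 := by ring
      _ ≤ Q α N x := h2
      _ ≤ E7 * (N:ℝ) ^ (2*α:ℝ) := hQx
  -- rewrite goal via u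
  rw [laguerre_eq]
  have hx12 : (0:ℝ) < x ^ ((1/2:ℝ)) := Real.rpow_pos_of_pos hx0 _
  have hux : x ^ (α / 2 : ℝ) * Real.exp (-x / 2) * P α N x = u α N x / x ^ ((1/2:ℝ)) := by
    rw [eq_div_iff hx12.ne']
    unfold u
    rw [show ((α+1)/2 : ℝ) = α/2 + 1/2 by ring, Real.rpow_add hx0]
    ring
  rw [hux]
  -- fourth powers
  have hrhs0 : (0:ℝ) ≤ C * (N:ℝ) ^ (α/2 : ℝ) * ((N:ℝ) * x) ^ (-(1/4) : ℝ) := by positivity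
  have hlhs0 : (0:ℝ) ≤ |u α N x / x ^ ((1/2:ℝ))| := abs_nonneg _
  rw [← pow_le_pow_iff_left₀ hlhs0 hrhs0 (by norm_num : (4:ℕ) ≠ 0)]
  have e1 : |u α N x / x ^ ((1/2:ℝ))| ^ 4 = u α N x ^ 4 / x^2 := by
    rw [abs_div, div_pow, abs_of_pos hx12, ← abs_pow]
    congr 1
    · exact abs_of_nonneg (by positivity)
    · rw [← Real.rpow_natCast (x ^ ((1/2:ℝ))) 4, ← Real.rpow_mul hx0.le]
      norm_num
  have hNx : (0:ℝ) < (N:ℝ) * x := by positivity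
  have e2 : (C * (N:ℝ) ^ (α/2 : ℝ) * ((N:ℝ) * x) ^ (-(1/4) : ℝ)) ^ 4 =
      C^4 * (N:ℝ) ^ (2*α:ℝ) * ((N:ℝ) * x)⁻¹ := by
    rw [mul_pow, mul_pow,
      ← Real.rpow_natCast ((N:ℝ) ^ (α/2:ℝ)) 4, ← Real.rpow_mul hNp.le,
      show (α/2) * ((4:ℕ):ℝ) = 2*α by push_cast; ring,
      ← Real.rpow_natCast (((N:ℝ)*x) ^ (-(1/4):ℝ)) 4, ← Real.rpow_mul hNx.le,
      show (-(1/4):ℝ) * ((4:ℕ):ℝ) = -1 by push_cast; norm_num,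
      Real.rpow_neg_one]
  rw [e1, e2]
  rw [div_le_iff₀ (by positivity : (0:ℝ) < x^2)]
  have key : u α N x ^ 4 ≤ E7 * (N:ℝ) ^ (2*α:ℝ) * (4*x) / N := by
    rw [le_div_iff₀ hNp]
    calc u α N x ^ 4 * N = (u α N x ^ 4 * ((N:ℝ)/(4*x))) * (4*x) := by
          field_simp
      _ ≤ (E7 * (N:ℝ) ^ (2*α:ℝ)) * (4*x) := by
          apply mul_le_mul_of_nonneg_right hu4 (by positivity)
      _ = E7 * (N:ℝ) ^ (2*α:ℝ) * (4*x) := by ring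
  calc u α N x ^ 4 ≤ E7 * (N:ℝ) ^ (2*α:ℝ) * (4*x) / N := key
    _ ≤ C^4 * (N:ℝ) ^ (2*α:ℝ) * ((N:ℝ)*x)⁻¹ * x^2 := by
        have hN2α : (0:ℝ) < (N:ℝ) ^ (2*α:ℝ) := Real.rpow_pos_of_pos hNp _
        have e3 : E7 * (N:ℝ) ^ (2*α:ℝ) * (4*x) / N = (4*E7) * (N:ℝ) ^ (2*α:ℝ) * ((N:ℝ)*x)⁻¹ * x^2 := by
          field_simp
        rw [e3]
        apply mul_le_mul_of_nonneg_right ?_ (sq_nonneg x)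
        apply mul_le_mul_of_nonneg_right ?_ (by positivity)
        apply mul_le_mul_of_nonneg_right hC4 hN2α.le

end
end

section
/- Fix α > −1. For every x > 0, lim_{N→∞} N^{−α}·x^{α/2}·L_N^{(α)}(x/N) = J_α(2√x), and the convergence is uniform on every compact subset of (0,∞). -/
open Filter Finset

noncomputable section

namespace LagBesselAux

open Real

/-- Gamma ratio. -/
noncomputable def Rq (α : ℝ) (N : ℕ) : ℝ :=
  Real.Gamma ((N:ℝ) + α + 1) / (Real.Gamma ((N:ℝ) + 1) * (N:ℝ) ^ α)

lemma gamma_comb {x y a b : ℝ} (hx : 0 < x) (hy : 0 < y) (ha : 0 ≤ a) (hb : 0 ≤ b)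
    (hab : a + b = 1) : Real.Gamma (a * x + b * y) ≤ Real.Gamma x ^ a * Real.Gamma y ^ b := by
  have hmem : a * x + b * y ∈ Set.Ioi (0:ℝ) := by
    have := (convex_Ioi (0:ℝ)) hx hy ha hb hab
    simpa [smul_eq_mul] using this
  have h := Real.convexOn_log_Gamma.2 hx hy ha hb hab
  simp only [Function.comp, smul_eq_mul] at h
  calc Real.Gamma (a * x + b * y) = Real.exp (Real.log (Real.Gamma (a * x + b * y))) :=
        (Real.exp_log (Real.Gamma_pos_of_pos hmem)).symm
    _ ≤ Real.exp (a * Real.log (Real.Gamma x) + b * Real.log (Real.Gamma y)) :=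
        Real.exp_le_exp.2 h
    _ = Real.Gamma x ^ a * Real.Gamma y ^ b := by
        rw [Real.exp_add, Real.rpow_def_of_pos (Real.Gamma_pos_of_pos hx),
          Real.rpow_def_of_pos (Real.Gamma_pos_of_pos hy), mul_comm a, mul_comm b]

lemma aux_div (c : ℝ) : Tendsto (fun N : ℕ => ((N:ℝ) + c) / N) atTop (nhds 1) := by
  have h : Tendsto (fun N : ℕ => 1 + c * ((N:ℝ))⁻¹) atTop (nhds (1 + c * 0)) :=
    tendsto_const_nhds.add (tendsto_const_nhds.mul (tendsto_inv_atTop_zero.comp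
      tendsto_natCast_atTop_atTop))
  rw [mul_zero, add_zero] at h
  refine h.congr' ?_
  filter_upwards [eventually_ge_atTop 1] with N hN
  have hN0 : (N:ℝ) ≠ 0 := by positivity
  field_simp

lemma aux_div2 (c : ℝ) : Tendsto (fun N : ℕ => (N:ℝ) / ((N:ℝ) + c)) atTop (nhds 1) := by
  have h := ((aux_div c).inv₀ one_ne_zero)
  rw [inv_one] at h
  refine h.congr' ?_
  have hc : Tendsto (fun N : ℕ => (N:ℝ)) atTop atTop := tendsto_natCast_atTop_atTop
  filter_upwards [hc.eventually_gt_atTop (|c|), eventually_ge_atTop 1] with N hN hN1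
  have h1 : (0:ℝ) < (N:ℝ) := by exact_mod_cast hN1
  have h2 : (0:ℝ) < (N:ℝ) + c := by
    have := neg_abs_le c
    linarith
  rw [inv_div]

lemma Rq_base {β : ℝ} (hβ0 : 0 ≤ β) (hβ1 : β ≤ 1) :
    Tendsto (Rq β) atTop (nhds 1) := by
  have hup : Tendsto (fun N : ℕ => ((N:ℝ) + 1) / N) atTop (nhds 1) := aux_div 1
  refine tendsto_of_tendsto_of_tendsto_of_le_of_le' tendsto_const_nhds hup ?_ ?_
  · -- 1 ≤ Rq β N eventually
    filter_upwards [eventually_ge_atTop 1] with N hN1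
    set n : ℝ := (N:ℝ) with hn
    have hn1 : (1:ℝ) ≤ n := by rw [hn]; exact_mod_cast hN1
    have hn0 : 0 < n := by linarith
    have hG1 : 0 < Real.Gamma (n + 1) := Real.Gamma_pos_of_pos (by linarith)
    have hGb : 0 < Real.Gamma (n + β + 1) := Real.Gamma_pos_of_pos (by linarith)
    have hnb : 0 < n + β := by linarith
    -- Γ(n+1) ≤ Γ(n+β+1)/(n+β)^β
    have hcomb : Real.Gamma (β * (n + β) + (1 - β) * (n + β + 1)) ≤
        Real.Gamma (n + β) ^ β * Real.Gamma (n + β + 1) ^ (1 - β) :=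
      gamma_comb hnb (by linarith) hβ0 (by linarith) (by ring)
    have harg : β * (n + β) + (1 - β) * (n + β + 1) = n + 1 := by ring
    rw [harg] at hcomb
    have hGnb : Real.Gamma (n + β) = Real.Gamma (n + β + 1) / (n + β) := by
      have := Real.Gamma_add_one (ne_of_gt hnb)
      rw [show n + β + 1 = (n + β) + 1 by ring, this]
      field_simp
    rw [hGnb, Real.div_rpow hGb.le hnb.le] at hcomb
    have hre : Real.Gamma (n + β + 1) ^ β / (n + β) ^ β * Real.Gamma (n + β + 1) ^ (1 - β)
        = Real.Gamma (n + β + 1) / (n + β) ^ β := by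
      rw [div_mul_eq_mul_div, ← Real.rpow_add hGb, show β + (1 - β) = 1 by ring,
        Real.rpow_one]
    rw [hre] at hcomb
    have hnbp : (0:ℝ) < (n + β) ^ β := Real.rpow_pos_of_pos hnb β
    have h1 : Real.Gamma (n + 1) * (n + β) ^ β ≤ Real.Gamma (n + β + 1) := by
      rw [← le_div_iff₀ hnbp]; exact hcomb
    have h2 : n ^ β ≤ (n + β) ^ β :=
      Real.rpow_le_rpow hn0.le (by linarith) hβ0
    have hnp : (0:ℝ) < n ^ β := Real.rpow_pos_of_pos hn0 β
    rw [Rq, le_div_iff₀ (by positivity), one_mul]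
    calc Real.Gamma (n + 1) * n ^ β ≤ Real.Gamma (n + 1) * (n + β) ^ β := by
          exact mul_le_mul_of_nonneg_left h2 hG1.le
      _ ≤ Real.Gamma (n + β + 1) := h1
  · -- Rq β N ≤ (N+1)/N eventually
    filter_upwards [eventually_ge_atTop 1] with N hN1
    set n : ℝ := (N:ℝ) with hn
    have hn1 : (1:ℝ) ≤ n := by rw [hn]; exact_mod_cast hN1
    have hn0 : 0 < n := by linarith
    have hG1 : 0 < Real.Gamma (n + 1) := Real.Gamma_pos_of_pos (by linarith)
    have hcomb : Real.Gamma ((1 - β) * (n + 1) + β * (n + 2)) ≤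
        Real.Gamma (n + 1) ^ (1 - β) * Real.Gamma (n + 2) ^ β :=
      gamma_comb (by linarith) (by linarith) (by linarith) hβ0 (by ring)
    have harg : (1 - β) * (n + 1) + β * (n + 2) = n + β + 1 := by ring
    rw [harg] at hcomb
    have hG2 : Real.Gamma (n + 2) = (n + 1) * Real.Gamma (n + 1) := by
      rw [show n + 2 = (n + 1) + 1 by ring, Real.Gamma_add_one (by linarith)]
    rw [hG2, Real.mul_rpow (by linarith) hG1.le] at hcomb
    have hre : Real.Gamma (n + 1) ^ (1 - β) * ((n + 1) ^ β * Real.Gamma (n + 1) ^ β)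
        = Real.Gamma (n + 1) * (n + 1) ^ β := by
      rw [mul_comm ((n+1)^β), ← mul_assoc, ← Real.rpow_add hG1,
        show (1 - β) + β = 1 by ring, Real.rpow_one]
    rw [hre] at hcomb
    have hnp : (0:ℝ) < n ^ β := Real.rpow_pos_of_pos hn0 β
    have key : Rq β N ≤ (n + 1) ^ β / n ^ β := by
      rw [Rq, div_le_div_iff₀ (by positivity) hnp]
      calc Real.Gamma (n + β + 1) * n ^ β ≤ (Real.Gamma (n + 1) * (n + 1) ^ β) * n ^ β :=
            mul_le_mul_of_nonneg_right hcomb hnp.le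
        _ = (n + 1) ^ β * (Real.Gamma (n + 1) * n ^ β) := by ring
    refine key.trans ?_
    rw [← Real.div_rpow (by linarith) hn0.le]
    have hbase : (1:ℝ) ≤ (n + 1) / n := by
      rw [le_div_iff₀ hn0]; linarith
    calc ((n + 1) / n) ^ β ≤ ((n + 1) / n) ^ (1:ℝ) :=
          Real.rpow_le_rpow_of_exponent_le hbase hβ1
      _ = (n + 1) / n := Real.rpow_one _

lemma Rq_eventually_eq (α : ℝ) : ∀ᶠ N : ℕ in atTop,
    Rq (α + 1) N = Rq α N * (((N:ℝ) + α + 1) / N) := by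
  have hc : Tendsto (fun N : ℕ => (N:ℝ)) atTop atTop := tendsto_natCast_atTop_atTop
  filter_upwards [hc.eventually_gt_atTop (|α| + 1), eventually_ge_atTop 1] with N hN hN1
  have hn1 : (1:ℝ) ≤ (N:ℝ) := by exact_mod_cast hN1
  have hn0 : (0:ℝ) < (N:ℝ) := by linarith
  have hna : (0:ℝ) < (N:ℝ) + α + 1 := by
    have := neg_abs_le α; linarith
  have hG : Real.Gamma ((N:ℝ) + (α + 1) + 1) = ((N:ℝ) + α + 1) * Real.Gamma ((N:ℝ) + α + 1) := by
    rw [show (N:ℝ) + (α + 1) + 1 = ((N:ℝ) + α + 1) + 1 by ring,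
      Real.Gamma_add_one (ne_of_gt hna)]
  have hpow : (N:ℝ) ^ (α + 1) = (N:ℝ) ^ α * (N:ℝ) := by
    rw [Real.rpow_add hn0, Real.rpow_one]
  have hG1 : Real.Gamma ((N:ℝ) + 1) ≠ 0 := ne_of_gt (Real.Gamma_pos_of_pos (by linarith))
  have hp : ((N:ℝ):ℝ) ^ α ≠ 0 := ne_of_gt (Real.rpow_pos_of_pos hn0 α)
  rw [Rq, Rq, hG, hpow]
  field_simp

lemma Rq_step {α : ℝ} (h : Tendsto (Rq α) atTop (nhds 1)) :
    Tendsto (Rq (α + 1)) atTop (nhds 1) := by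
  have h2 := h.mul (aux_div (α + 1))
  rw [mul_one] at h2
  refine h2.congr' ?_
  filter_upwards [Rq_eventually_eq α] with N hN
  rw [hN]
  ring_nf

lemma Rq_down {α : ℝ} (h : Tendsto (Rq (α + 1)) atTop (nhds 1)) :
    Tendsto (Rq α) atTop (nhds 1) := by
  have h2 := h.mul (aux_div2 (α + 1))
  rw [mul_one] at h2
  refine h2.congr' ?_
  have hc : Tendsto (fun N : ℕ => (N:ℝ)) atTop atTop := tendsto_natCast_atTop_atTop
  filter_upwards [Rq_eventually_eq α, hc.eventually_gt_atTop (|α| + 1),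
    eventually_ge_atTop 1] with N hE hN hN1
  have hn1 : (1:ℝ) ≤ (N:ℝ) := by exact_mod_cast hN1
  have hn0 : (0:ℝ) < (N:ℝ) := by linarith
  have hna : (0:ℝ) < (N:ℝ) + α + 1 := by
    have := neg_abs_le α; linarith
  rw [hE]
  have : (N:ℝ) + (α + 1) = (N:ℝ) + α + 1 := by ring
  rw [this]
  field_simp

lemma gamma_ratio {α : ℝ} (hα : -1 < α) : Tendsto (Rq α) atTop (nhds 1) := by
  have hQnat : ∀ m : ℕ, Tendsto (Rq (Int.fract α + m)) atTop (nhds 1) := by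
    intro m
    induction m with
    | zero => simpa using Rq_base (Int.fract_nonneg α) (Int.fract_lt_one α).le
    | succ k ih =>
      have := Rq_step ih
      convert this using 2
      push_cast
      ring
  have hfl : ((⌊α⌋ : ℝ)) + Int.fract α = α := Int.floor_add_fract α
  by_cases hc : ⌊α⌋ = -1
  · -- α + 1 = Int.fract α
    apply Rq_down
    have h2 : ((⌊α⌋:ℝ)) = -1 := by rw [hc]; norm_num
    have he : α + 1 = Int.fract α + (0:ℕ) := by
      push_cast
      linarith
    rw [he]
    exact hQnat 0
  · have hge : (0:ℤ) ≤ ⌊α⌋ := by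
      have h1 : (-1:ℤ) ≤ ⌊α⌋ := by
        rw [show (-1:ℤ) = ⌊(-1:ℝ)⌋ by norm_num]
        exact Int.floor_le_floor hα.le
      omega
    have h2 : ((⌊α⌋.toNat : ℕ) : ℝ) = (⌊α⌋ : ℝ) := by
      exact_mod_cast congrArg (fun z : ℤ => (z : ℝ)) (Int.toNat_of_nonneg hge)
    have he : α = Int.fract α + (⌊α⌋.toNat : ℕ) := by
      rw [h2]
      linarith
    rw [he]
    exact hQnat _

lemma summable_A {α : ℝ} (hα : -1 < α) {b : ℝ} (hb : 0 < b) :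
    Summable (fun k : ℕ => b ^ k / ((k.factorial : ℝ) * Real.Gamma ((k:ℝ) + α + 1))) := by
  set f := fun k : ℕ => b ^ k / ((k.factorial : ℝ) * Real.Gamma ((k:ℝ) + α + 1)) with hf
  have hpos : ∀ k : ℕ, 0 < f k := by
    intro k
    have h1 : (0:ℝ) < (k.factorial : ℝ) := by exact_mod_cast k.factorial_pos
    have h2 : 0 < Real.Gamma ((k:ℝ) + α + 1) := by
      apply Real.Gamma_pos_of_pos
      have : (0:ℝ) ≤ (k:ℝ) := Nat.cast_nonneg k
      linarith
    positivity
  apply summable_of_ratio_test_tendsto_lt_one zero_lt_one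
    (Eventually.of_forall fun k => (hpos k).ne')
  have hratio : ∀ k : ℕ, ‖f (k+1)‖ / ‖f k‖ = b / (((k:ℝ) + 1) * ((k:ℝ) + α + 1)) := by
    intro k
    have h1 : (0:ℝ) < (k.factorial : ℝ) := by exact_mod_cast k.factorial_pos
    have h2 : 0 < Real.Gamma ((k:ℝ) + α + 1) := by
      apply Real.Gamma_pos_of_pos
      have : (0:ℝ) ≤ (k:ℝ) := Nat.cast_nonneg k
      linarith
    have hk1 : (0:ℝ) < (k:ℝ) + 1 := by positivity
    have hka : (0:ℝ) < (k:ℝ) + α + 1 := by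
      have : (0:ℝ) ≤ (k:ℝ) := Nat.cast_nonneg k
      linarith
    rw [Real.norm_eq_abs, Real.norm_eq_abs, abs_of_pos (hpos _), abs_of_pos (hpos _)]
    have hGs : Real.Gamma (((k+1 : ℕ):ℝ) + α + 1) = ((k:ℝ) + α + 1) * Real.Gamma ((k:ℝ) + α + 1) := by
      push_cast
      rw [show (k:ℝ) + 1 + α + 1 = ((k:ℝ) + α + 1) + 1 by ring,
        Real.Gamma_add_one (ne_of_gt hka)]
    have hfs : ((k+1).factorial : ℝ) = ((k:ℝ) + 1) * (k.factorial : ℝ) := by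
      rw [Nat.factorial_succ]; push_cast; ring
    rw [hf]
    simp only
    rw [hGs, hfs, pow_succ]
    field_simp
  rw [show (0:ℝ) = 0 by rfl]
  refine Tendsto.congr (fun k => (hratio k).symm) ?_
  have hdenom : Tendsto (fun k : ℕ => ((k:ℝ) + 1) * ((k:ℝ) + α + 1)) atTop atTop := by
    apply Tendsto.atTop_mul_atTop₀
    · exact tendsto_atTop_add_const_right _ 1 tendsto_natCast_atTop_atTop
    · have := tendsto_atTop_add_const_right atTop (α + 1) tendsto_natCast_atTop_atTop
      refine this.congr fun k => by ring
  exact Tendsto.div_atTop tendsto_const_nhds hdenom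

lemma d_tendsto (k : ℕ) :
    Tendsto (fun N : ℕ => ((N.descFactorial k : ℝ)) / (N:ℝ) ^ k) atTop (nhds 1) := by
  have hlow : Tendsto (fun N : ℕ => (((N:ℝ) + -(k:ℝ)) / N) ^ k) atTop (nhds 1) := by
    have := (aux_div (-(k:ℝ))).pow k
    rwa [one_pow] at this
  refine tendsto_of_tendsto_of_tendsto_of_le_of_le' hlow tendsto_const_nhds ?_ ?_
  · -- lower bound
    filter_upwards [eventually_ge_atTop (k+1)] with N hN
    have hkN : k ≤ N := by omega
    have hn0 : (0:ℝ) < (N:ℝ) := by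
      have : 0 < N := by omega
      exact_mod_cast this
    have h1 : (N - k) ^ k ≤ N.descFactorial k := by
      rw [Nat.descFactorial_eq_prod_range]
      calc (N - k) ^ k = ∏ _i ∈ range k, (N - k) := by rw [Finset.prod_const, Finset.card_range]
        _ ≤ ∏ i ∈ range k, (N - i) := by
            apply Finset.prod_le_prod'
            intro i hi
            have := Finset.mem_range.mp hi
            omega
    have h2 : (((N - k : ℕ) : ℝ)) = (N:ℝ) - k := by
      rw [Nat.cast_sub hkN]
    have h3 : (((N - k : ℕ) : ℝ)) ^ k ≤ (N.descFactorial k : ℝ) := by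
      exact_mod_cast h1
    rw [div_pow, div_le_div_iff₀ (by positivity) (by positivity)]
    calc ((N:ℝ) + -(k:ℝ)) ^ k * (N:ℝ) ^ k = (((N:ℝ) - k) ^ k) * (N:ℝ) ^ k := by ring_nf
      _ ≤ (N.descFactorial k : ℝ) * (N:ℝ) ^ k := by
          apply mul_le_mul_of_nonneg_right _ (by positivity)
          rw [← h2]
          exact h3
  · -- upper bound  ≤ 1
    filter_upwards [eventually_ge_atTop (k+1)] with N hN
    have hn0 : (0:ℝ) < (N:ℝ) ^ k := by
      have : 0 < N := by omega
      positivity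
    rw [div_le_one hn0]
    exact_mod_cast Nat.descFactorial_le_pow N k

lemma d_le_one {N k : ℕ} (hk : k ≤ N) :
    ((N.descFactorial k : ℝ)) / (N:ℝ) ^ k ≤ 1 := by
  rcases Nat.eq_zero_or_pos N with rfl | hN
  · interval_cases k
    simp
  · have hn0 : (0:ℝ) < (N:ℝ) ^ k := by positivity
    rw [div_le_one hn0]
    exact_mod_cast Nat.descFactorial_le_pow N k

lemma laguerre_rewrite {α : ℝ} (hα : -1 < α) {N : ℕ} (hN : 1 ≤ N) (x : ℝ) :
    (N:ℝ) ^ (-α) * laguerreL N α (x / N) =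
      ∑ k ∈ Finset.range (N + 1), (-1) ^ k *
        (x ^ k / ((k.factorial : ℝ) * Real.Gamma ((k:ℝ) + α + 1))) *
        (Rq α N * ((N.descFactorial k : ℝ) / (N:ℝ) ^ k)) := by
  rw [laguerreL, Finset.mul_sum]
  refine Finset.sum_congr rfl fun k hk => ?_
  have hk' : k ≤ N := Nat.lt_succ_iff.mp (Finset.mem_range.mp hk)
  have hn0 : (0:ℝ) < (N:ℝ) := by exact_mod_cast Nat.lt_of_lt_of_le Nat.zero_lt_one hN
  have hfact : ((N - k).factorial : ℝ) * (N.descFactorial k : ℝ) = (N.factorial : ℝ) := by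
    exact_mod_cast congrArg (fun n : ℕ => (n : ℝ)) (Nat.factorial_mul_descFactorial hk')
  have hGamN : Real.Gamma ((N:ℝ) + 1) = (N.factorial : ℝ) := by
    rw [show ((N:ℝ) + 1) = ((N:ℕ):ℝ) + 1 by norm_num, Real.Gamma_nat_eq_factorial]
  have hGk : (0:ℝ) < Real.Gamma ((k:ℝ) + α + 1) := by
    apply Real.Gamma_pos_of_pos
    have : (0:ℝ) ≤ (k:ℝ) := Nat.cast_nonneg k
    linarith
  have hfk : (0:ℝ) < (k.factorial : ℝ) := by exact_mod_cast k.factorial_pos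
  have hfNk : (0:ℝ) < ((N - k).factorial : ℝ) := by exact_mod_cast (N - k).factorial_pos
  have hfN : (0:ℝ) < (N.factorial : ℝ) := by exact_mod_cast N.factorial_pos
  have hpa : (0:ℝ) < (N:ℝ) ^ α := Real.rpow_pos_of_pos hn0 α
  have hneg : (N:ℝ) ^ (-α) = ((N:ℝ) ^ α)⁻¹ := by
    rw [Real.rpow_neg hn0.le]
  rw [Rq, hGamN, hneg, div_pow]
  field_simp
  ring_nf
  rw [mul_comm]
  ring_nf
  rw [← hfact]
  ring

lemma bessel_rewrite {α : ℝ} {x : ℝ} (hx : 0 < x) :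
    besselJ α (2 * Real.sqrt x) =
      x ^ (α / 2) * ∑' k : ℕ, (-1) ^ k * (x ^ k / ((k.factorial : ℝ) * Real.Gamma ((k:ℝ) + α + 1))) := by
  rw [besselJ, ← tsum_mul_left]
  congr 1
  funext m
  have h2 : 2 * Real.sqrt x / 2 = Real.sqrt x := by ring
  rw [h2]
  have hs : Real.sqrt x = x ^ ((1:ℝ)/2) := Real.sqrt_eq_rpow x
  have key : (x ^ ((1:ℝ)/2)) ^ (2*(m:ℝ)+α) = x ^ m * x ^ (α/2) := by
    rw [← Real.rpow_mul hx.le, show (1:ℝ)/2*(2*(m:ℝ)+α) = (m:ℝ) + α/2 by ring,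
      Real.rpow_add hx, Real.rpow_natCast]
  rw [hs, key]
  ring

lemma key_estimate (σ g c : ℕ → ℝ) (N m0 : ℕ) (δ S : ℝ) (hδ0 : 0 ≤ δ)
    (hσs : Summable σ) (hg : Summable g) (hgpos : ∀ k, 0 ≤ g k)
    (hσg : ∀ k, |σ k| ≤ g k) (hS : ∑' k, g k ≤ S) (hm0N : m0 ≤ N)
    (hcsmall : ∀ k < m0, |c k - 1| ≤ δ)
    (hcbig : ∀ k ≤ N, 0 ≤ c k ∧ c k ≤ 2)
    (htail1 : ∑' k, g (k + m0) ≤ δ)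
    (htail2 : ∑' k, g (k + (N+1)) ≤ δ) :
    |(∑' k, σ k) - ∑ k ∈ Finset.range (N+1), σ k * c k| ≤ δ * S + δ + δ := by
  have hsplit := Summable.sum_add_tsum_nat_add (f := σ) (N+1) hσs
  set T := ∑' k : ℕ, σ (k + (N+1)) with hT_def
  have hgshift : ∀ m : ℕ, Summable (fun k => g (k + m)) := fun m =>
    (summable_nat_add_iff m).2 hg
  have hdiff : (∑' k, σ k) - ∑ k ∈ Finset.range (N+1), σ k * c k
      = (∑ k ∈ Finset.range (N+1), σ k * (1 - c k)) + T := by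
    rw [← hsplit]
    have h1 : ∑ k ∈ Finset.range (N+1), σ k * (1 - c k)
        = ∑ k ∈ Finset.range (N+1), σ k - ∑ k ∈ Finset.range (N+1), σ k * c k := by
      rw [← Finset.sum_sub_distrib]
      exact Finset.sum_congr rfl fun k _ => by ring
    rw [h1]; ring
  rw [hdiff]
  have hsn : Summable (fun k => |σ (k + (N+1))|) :=
    Summable.of_nonneg_of_le (fun k => abs_nonneg _) (fun k => hσg _) (hgshift (N+1))
  have hTb : |T| ≤ δ := by
    calc |T| ≤ ∑' k, |σ (k + (N+1))| := by
          simpa [Real.norm_eq_abs] using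
            norm_tsum_le_tsum_norm (f := fun k => σ (k + (N+1)))
              (by simpa [Real.norm_eq_abs] using hsn)
      _ ≤ ∑' k, g (k + (N+1)) := Summable.tsum_le_tsum (fun k => hσg _) hsn (hgshift (N+1))
      _ ≤ δ := htail2
  have hmain : ∑ k ∈ Finset.range (N+1), |σ k * (1 - c k)| ≤ δ * S + δ := by
    rw [← Finset.sum_range_add_sum_Ico (fun k => |σ k * (1 - c k)|) (show m0 ≤ N+1 by omega)]
    have hb1 : ∑ k ∈ Finset.range m0, |σ k * (1 - c k)| ≤ δ * S := by
      calc ∑ k ∈ Finset.range m0, |σ k * (1 - c k)|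
          ≤ ∑ k ∈ Finset.range m0, g k * δ := by
            apply Finset.sum_le_sum
            intro k hk
            rw [abs_mul]
            have h2 : |1 - c k| ≤ δ := by
              rw [abs_sub_comm]; exact hcsmall k (Finset.mem_range.mp hk)
            exact mul_le_mul (hσg k) h2 (abs_nonneg _) (hgpos k)
        _ = δ * ∑ k ∈ Finset.range m0, g k := by rw [← Finset.sum_mul]; ring
        _ ≤ δ * S := by
            apply mul_le_mul_of_nonneg_left _ hδ0
            exact le_trans (Summable.sum_le_tsum _ (fun k _ => hgpos k) hg) hS
    have hb2 : ∑ k ∈ Finset.Ico m0 (N+1), |σ k * (1 - c k)| ≤ δ := by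
      calc ∑ k ∈ Finset.Ico m0 (N+1), |σ k * (1 - c k)|
          ≤ ∑ k ∈ Finset.Ico m0 (N+1), g k := by
            apply Finset.sum_le_sum
            intro k hk
            obtain ⟨hk1, hk2⟩ := Finset.mem_Ico.mp hk
            have hkN : k ≤ N := by omega
            obtain ⟨hc0, hc2⟩ := hcbig k hkN
            rw [abs_mul]
            have h2 : |1 - c k| ≤ 1 := by rw [abs_le]; constructor <;> linarith
            calc |σ k| * |1 - c k| ≤ g k * 1 :=
                  mul_le_mul (hσg k) h2 (abs_nonneg _) (hgpos k)
              _ = g k := mul_one _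
        _ = ∑ k ∈ Finset.range (N+1-m0), g (m0 + k) := Finset.sum_Ico_eq_sum_range _ _ _
        _ ≤ ∑' k, g (m0 + k) := by
            apply Summable.sum_le_tsum _ (fun k _ => hgpos _)
            exact (hgshift m0).congr fun k => by rw [add_comm]
        _ = ∑' k, g (k + m0) := tsum_congr fun k => by rw [add_comm]
        _ ≤ δ := htail1
    linarith
  calc |(∑ k ∈ Finset.range (N+1), σ k * (1 - c k)) + T|
      ≤ |∑ k ∈ Finset.range (N+1), σ k * (1 - c k)| + |T| := abs_add_le _ _
    _ ≤ (∑ k ∈ Finset.range (N+1), |σ k * (1 - c k)|) + |T| := by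
        gcongr
        exact Finset.abs_sum_le_sum_abs _ _
    _ ≤ (δ * S + δ) + δ := add_le_add hmain hTb

lemma main_uniform {α : ℝ} (hα : -1 < α) (K : Set ℝ) (hK : IsCompact K)
    (hK0 : K ⊆ Set.Ioi 0) :
    TendstoUniformlyOn
      (fun (N : ℕ) (x : ℝ) => (N : ℝ) ^ (-α) * x ^ (α / 2) * laguerreL N α (x / N))
      (fun x => besselJ α (2 * Real.sqrt x)) atTop K := by
  rcases K.eq_empty_or_nonempty with rfl | hne
  · exact tendstoUniformlyOn_empty
  set a := sInf K with ha_def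
  set b := sSup K with hb_def
  have haK : a ∈ K := hK.sInf_mem hne
  have ha : 0 < a := hK0 haK
  have hmem_ab : ∀ x ∈ K, a ≤ x ∧ x ≤ b := fun x hx =>
    ⟨csInf_le hK.bddBelow hx, le_csSup hK.bddAbove hx⟩
  have hb : 0 < b := lt_of_lt_of_le ha (hmem_ab a haK).2
  set M := max (a ^ (α/2)) (b ^ (α/2)) with hM_def
  have hMx : ∀ x ∈ K, x ^ (α/2) ≤ M := by
    intro x hx
    obtain ⟨hax, hxb⟩ := hmem_ab x hx
    rcases le_total 0 (α/2) with hsg | hsg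
    · exact le_trans (Real.rpow_le_rpow (lt_of_lt_of_le ha hax).le hxb hsg) (le_max_right _ _)
    · exact le_trans (Real.rpow_le_rpow_of_nonpos ha hax hsg) (le_max_left _ _)
  set g := fun k : ℕ => b ^ k / ((k.factorial : ℝ) * Real.Gamma ((k:ℝ) + α + 1)) with hg_def
  have hΓpos : ∀ k : ℕ, 0 < Real.Gamma ((k:ℝ) + α + 1) := by
    intro k
    apply Real.Gamma_pos_of_pos
    have : (0:ℝ) ≤ (k:ℝ) := Nat.cast_nonneg k
    linarith
  have hgpos : ∀ k, 0 < g k := by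
    intro k
    have h1 : (0:ℝ) < (k.factorial : ℝ) := by exact_mod_cast k.factorial_pos
    have h2 := hΓpos k
    rw [hg_def]
    positivity
  have hg : Summable g := summable_A hα hb
  have hσ_bound : ∀ x ∈ K, ∀ k : ℕ,
      |(-1:ℝ)^k * (x ^ k / ((k.factorial : ℝ) * Real.Gamma ((k:ℝ) + α + 1)))| ≤ g k := by
    intro x hx k
    obtain ⟨hax, hxb⟩ := hmem_ab x hx
    have hx0 : 0 < x := hK0 hx
    have h1 : (0:ℝ) < (k.factorial : ℝ) := by exact_mod_cast k.factorial_pos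
    have h2 := hΓpos k
    rw [abs_mul, abs_pow, abs_neg, abs_one, one_pow, one_mul, abs_div,
      abs_of_pos (by positivity : (0:ℝ) < x ^ k),
      abs_of_pos (by positivity : (0:ℝ) < (k.factorial : ℝ) * Real.Gamma ((k:ℝ) + α + 1))]
    rw [hg_def]
    apply div_le_div_of_nonneg_right _ (by positivity)
    · exact pow_le_pow_left₀ hx0.le hxb k
  have hσ_sum : ∀ x ∈ K, Summable (fun k : ℕ =>
      (-1:ℝ)^k * (x ^ k / ((k.factorial : ℝ) * Real.Gamma ((k:ℝ) + α + 1)))) := by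
    intro x hx
    apply Summable.of_norm_bounded hg
    intro k
    rw [Real.norm_eq_abs]
    exact hσ_bound x hx k
  rw [Metric.tendstoUniformlyOn_iff]
  intro ε hε
  set S := ∑' k, g k with hS_def
  have hS0 : 0 ≤ S := tsum_nonneg fun k => (hgpos k).le
  set M' := max M 1 with hM'_def
  have hM'1 : (1:ℝ) ≤ M' := le_max_right _ _
  have hM'0 : (0:ℝ) < M' := lt_of_lt_of_le one_pos hM'1
  set δ := ε / (M' * (S + 5)) with hδ_def
  have hS5 : (0:ℝ) < S + 5 := by linarith
  have hδ : 0 < δ := div_pos hε (mul_pos hM'0 hS5)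
  have htail : Tendsto (fun m : ℕ => ∑' k, g (k + m)) atTop (nhds 0) := tendsto_sum_nat_add g
  obtain ⟨m0, hm0⟩ := (htail.eventually_lt_const hδ).exists
  have hR := gamma_ratio hα
  have hc : ∀ k : ℕ, Tendsto (fun N : ℕ => Rq α N * ((N.descFactorial k : ℝ) / (N:ℝ)^k))
      atTop (nhds 1) := by
    intro k
    have := hR.mul (d_tendsto k)
    rwa [mul_one] at this
  have hck : ∀ᶠ N : ℕ in atTop, ∀ k ∈ Finset.range m0,
      |Rq α N * ((N.descFactorial k : ℝ) / (N:ℝ)^k) - 1| ≤ δ := by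
    rw [eventually_all_finset]
    intro k _
    obtain ⟨N₀, hN₀⟩ := Metric.tendsto_atTop.mp (hc k) δ hδ
    filter_upwards [eventually_ge_atTop N₀] with n hn
    have := hN₀ n hn
    rw [Real.dist_eq] at this
    exact this.le
  have hR2 : ∀ᶠ N : ℕ in atTop, Rq α N ≤ 2 :=
    (hR.eventually_lt_const one_lt_two).mono fun N h => h.le
  have hTN : ∀ᶠ N : ℕ in atTop, ∑' k, g (k + (N+1)) < δ :=
    ((htail.comp (tendsto_add_atTop_nat 1)).eventually_lt_const hδ)
  filter_upwards [hR2, hck, hTN, eventually_ge_atTop (max 1 m0)] with N h2 hkc hgt hNge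
  have hN1 : 1 ≤ N := le_trans (le_max_left _ _) hNge
  have hNm0 : m0 ≤ N := le_trans (le_max_right _ _) hNge
  intro x hx
  obtain ⟨hax, hxb⟩ := hmem_ab x hx
  have hx0 : 0 < x := hK0 hx
  have hn0 : (0:ℝ) < (N:ℝ) := by exact_mod_cast Nat.lt_of_lt_of_le Nat.zero_lt_one hN1
  have hRqpos : 0 ≤ Rq α N := by
    rw [Rq]
    have h1 : 0 < Real.Gamma ((N:ℝ) + α + 1) := Real.Gamma_pos_of_pos (by linarith)
    have h2 : 0 < Real.Gamma ((N:ℝ) + 1) := Real.Gamma_pos_of_pos (by linarith)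
    have h3 : 0 < (N:ℝ) ^ α := Real.rpow_pos_of_pos hn0 α
    positivity
  have hcbig : ∀ k ≤ N, 0 ≤ Rq α N * ((N.descFactorial k : ℝ) / (N:ℝ)^k) ∧
      Rq α N * ((N.descFactorial k : ℝ) / (N:ℝ)^k) ≤ 2 := by
    intro k hk
    have hd0 : 0 ≤ (N.descFactorial k : ℝ) / (N:ℝ)^k := by positivity
    refine ⟨mul_nonneg hRqpos hd0, ?_⟩
    calc Rq α N * ((N.descFactorial k : ℝ) / (N:ℝ)^k) ≤ Rq α N * 1 :=
          mul_le_mul_of_nonneg_left (d_le_one hk) hRqpos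
      _ = Rq α N := mul_one _
      _ ≤ 2 := h2
  -- rewrite both sides
  rw [Real.dist_eq]
  have hF : (N:ℝ)^(-α) * x^(α/2) * laguerreL N α (x / N)
      = x^(α/2) * ∑ k ∈ Finset.range (N+1),
          ((-1:ℝ)^k * (x ^ k / ((k.factorial : ℝ) * Real.Gamma ((k:ℝ) + α + 1)))) *
          (Rq α N * ((N.descFactorial k : ℝ) / (N:ℝ)^k)) := by
    rw [mul_comm ((N:ℝ)^(-α)) (x^(α/2)), mul_assoc, laguerre_rewrite hα hN1 x]
  rw [bessel_rewrite hx0, hF, ← mul_sub, abs_mul,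
    abs_of_pos (Real.rpow_pos_of_pos hx0 (α/2))]
  have hest := key_estimate
    (fun k : ℕ => (-1:ℝ)^k * (x ^ k / ((k.factorial : ℝ) * Real.Gamma ((k:ℝ) + α + 1))))
    g (fun k : ℕ => Rq α N * ((N.descFactorial k : ℝ) / (N:ℝ)^k)) N m0 δ S hδ.le
    (hσ_sum x hx) hg (fun k => (hgpos k).le) (hσ_bound x hx) le_rfl hNm0
    (fun k hk => hkc k (Finset.mem_range.mpr hk)) hcbig hm0.le hgt.le
  calc x^(α/2) * |(∑' k : ℕ, (-1:ℝ)^k * (x ^ k / ((k.factorial : ℝ) *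
          Real.Gamma ((k:ℝ) + α + 1)))) - ∑ k ∈ Finset.range (N+1),
          ((-1:ℝ)^k * (x ^ k / ((k.factorial : ℝ) * Real.Gamma ((k:ℝ) + α + 1)))) *
          (Rq α N * ((N.descFactorial k : ℝ) / (N:ℝ)^k))|
      ≤ M' * (δ * S + δ + δ) := by
        apply mul_le_mul (le_trans (hMx x hx) (le_max_left _ _)) hest (abs_nonneg _) hM'0.le
    _ = ε * ((S + 2) / (S + 5)) := by
        rw [hδ_def]
        field_simp
        ring
    _ < ε := by
        have h1 : (S + 2) / (S + 5) < 1 := by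
          rw [div_lt_one hS5]; linarith
        calc ε * ((S + 2) / (S + 5)) < ε * 1 := by
              exact mul_lt_mul_of_pos_left h1 hε
          _ = ε := mul_one _

end LagBesselAux

/-- Hard-edge (Hilb-type) limit of Laguerre polynomials: pointwise convergence to a Bessel
function on `(0,∞)`, uniformly on compact subsets. -/
theorem laguerre_poly_bessel_limit (α : ℝ) (hα : -1 < α) :
    (∀ x : ℝ, 0 < x →
      Tendsto (fun N : ℕ => (N : ℝ) ^ (-α) * x ^ (α / 2) * laguerreL N α (x / N)) atTop
        (nhds (besselJ α (2 * Real.sqrt x)))) ∧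
    (∀ K : Set ℝ, IsCompact K → K ⊆ Set.Ioi 0 →
      TendstoUniformlyOn
        (fun (N : ℕ) (x : ℝ) => (N : ℝ) ^ (-α) * x ^ (α / 2) * laguerreL N α (x / N))
        (fun x => besselJ α (2 * Real.sqrt x)) atTop K) := by
  constructor
  · intro x hx
    have h := LagBesselAux.main_uniform hα {x} isCompact_singleton
      (by simpa using hx)
    exact h.tendsto_at (Set.mem_singleton x)
  · intro K hK hK0
    exact LagBesselAux.main_uniform hα K hK hK0

end
end
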